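/- arXiv:1807.07059 — 6 statements merged into one kernel-verified Lean document; each statement's English description precedes it below -/
import Mathlib

section
/- Let A be a symmetric positive definite n×n real matrix and 1 < γ < 2. Then for every x ≠ 0 and every y in ℝ^n, y^T (A + (γ-2)(Ax)(Ax)^T/(x^T A x)) y ≥ (γ-1) λ₁ |y|², where λ₁ > 0 is the smallest eigenvalue of A. In particular the matrix A + (γ-2)(Ax)(Ax)^T/(x^T A x) is positive definite. -/
/-!
Cauchy–Schwarz for the semi-inner product `⟨u, v⟩_A = uᵀ A v` gives `(yᵀAx)² / xᵀAx ≤ yᵀAy`,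
so for `γ ≤ 2` the rank-one correction lowers the quadratic form by at most `(2 - γ) yᵀAy`.
The corrected form is therefore at least `(γ - 1) yᵀAy`, which in turn is at least
`(γ - 1) λ₁ |y|²` because `λ₁ • 1 ≤ A` in the Loewner order.
-/

open Matrix
open scoped MatrixOrder

namespace Matrix
variable {n : Type*} [Fintype n]

theorem IsHermitian.dotProduct_mulVec_comm {A : Matrix n n ℝ} (hA : A.IsHermitian) (x y : n → ℝ) :
    x ⬝ᵥ A *ᵥ y = y ⬝ᵥ A *ᵥ x := by
  rw [dotProduct_mulVec, ← mulVec_transpose, ← conjTranspose_eq_transpose_of_trivial, hA.eq,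
    dotProduct_comm]

theorem PosSemidef.sq_dotProduct_mulVec_le {A : Matrix n n ℝ} (hA : A.PosSemidef) (x y : n → ℝ) :
    (y ⬝ᵥ A *ᵥ x) ^ 2 ≤ (y ⬝ᵥ A *ᵥ y) * (x ⬝ᵥ A *ᵥ x) := by
  have hquad : ∀ t : ℝ, 0 ≤ (x ⬝ᵥ A *ᵥ x) * (t * t) + 2 * (y ⬝ᵥ A *ᵥ x) * t + y ⬝ᵥ A *ᵥ y := by
    intro t
    have hnonneg := hA.dotProduct_mulVec_nonneg (y + t • x)
    simp only [star_trivial, mulVec_add, mulVec_smul, dotProduct_add, add_dotProduct,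
      dotProduct_smul, smul_dotProduct, smul_eq_mul,
      hA.isHermitian.dotProduct_mulVec_comm x y] at hnonneg
    linarith
  have hdiscrim := discrim_le_zero hquad
  rw [discrim] at hdiscrim
  nlinarith

theorem PosSemidef.sq_dotProduct_mulVec_div_le {A : Matrix n n ℝ} (hA : A.PosSemidef)
    (x y : n → ℝ) :
    (y ⬝ᵥ A *ᵥ x) ^ 2 / (x ⬝ᵥ A *ᵥ x) ≤ y ⬝ᵥ A *ᵥ y :=
  div_le_of_le_mul₀ (by simpa using hA.dotProduct_mulVec_nonneg x)
    (by simpa using hA.dotProduct_mulVec_nonneg y) (hA.sq_dotProduct_mulVec_le x y)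

theorem dotProduct_vecMulVec_self_mulVec {R : Type*} [CommRing R] (v y : n → R) :
    y ⬝ᵥ vecMulVec v v *ᵥ y = (v ⬝ᵥ y) ^ 2 := by
  rw [vecMulVec_mulVec, op_smul_eq_smul, dotProduct_smul, smul_eq_mul, dotProduct_comm y, sq]

theorem IsHermitian.le_dotProduct_mulVec [DecidableEq n] {A : Matrix n n ℝ} (hA : A.IsHermitian)
    {c : ℝ} (hc : ∀ i, c ≤ hA.eigenvalues i) (y : n → ℝ) : c * (y ⬝ᵥ y) ≤ y ⬝ᵥ A *ᵥ y := by
  have hloewner : algebraMap ℝ _ c ≤ A := algebraMap_le_of_le_spectrum fun r hr => by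
    rw [hA.spectrum_real_eq_range_eigenvalues] at hr
    obtain ⟨i, rfl⟩ := hr
    exact hc i
  have hnonneg := (le_iff.mp hloewner).dotProduct_mulVec_nonneg y
  simpa only [star_trivial, sub_mulVec, dotProduct_sub, sub_nonneg, Algebra.algebraMap_eq_smul_one,
    smul_mulVec, one_mulVec, dotProduct_smul, smul_eq_mul] using hnonneg

theorem PosSemidef.sub_one_mul_le_dotProduct_add_smul_vecMulVec {A : Matrix n n ℝ}
    (hA : A.PosSemidef) {γ : ℝ} (hγ : γ ≤ 2) (x y : n → ℝ) :
    (γ - 1) * (y ⬝ᵥ A *ᵥ y) ≤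
      y ⬝ᵥ (A + ((γ - 2) / (x ⬝ᵥ A *ᵥ x)) • vecMulVec (A *ᵥ x) (A *ᵥ x)) *ᵥ y := by
  have hcs : (γ - 2) * (y ⬝ᵥ A *ᵥ y) ≤ (γ - 2) / (x ⬝ᵥ A *ᵥ x) * (y ⬝ᵥ A *ᵥ x) ^ 2 := by
    rw [div_mul_eq_mul_div, mul_div_assoc]
    exact mul_le_mul_of_nonpos_left (hA.sq_dotProduct_mulVec_div_le x y) (by linarith)
  rw [add_mulVec, dotProduct_add, smul_mulVec, dotProduct_smul, smul_eq_mul,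
    dotProduct_vecMulVec_self_mulVec, dotProduct_comm (A *ᵥ x)]
  linarith

theorem IsHermitian.add_smul_vecMulVec_self {A : Matrix n n ℝ} (hA : A.IsHermitian) (c : ℝ)
    (v : n → ℝ) : (A + c • vecMulVec v v).IsHermitian := by
  have := (posSemidef_vecMulVec_self_star v).isHermitian
  rw [star_trivial] at this
  exact hA.add (this.smul (IsSelfAdjoint.all c))

end Matrix

theorem stmt_4_general {n : ℕ} (A : Matrix (Fin n) (Fin n) ℝ) (hA : A.PosDef)
    (γ : ℝ) (hγ1 : 1 < γ) (hγ2 : γ < 2) (x : Fin n → ℝ) :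
    (∀ y : Fin n → ℝ,
      (γ - 1) * (⨅ i, hA.isHermitian.eigenvalues i) * (∑ i, y i ^ 2) ≤
        y ⬝ᵥ (A + ((γ - 2) / (x ⬝ᵥ A.mulVec x)) •
          vecMulVec (A.mulVec x) (A.mulVec x)).mulVec y) ∧
    (A + ((γ - 2) / (x ⬝ᵥ A.mulVec x)) • vecMulVec (A.mulVec x) (A.mulVec x)).PosDef := by
  have hcorr := hA.posSemidef.sub_one_mul_le_dotProduct_add_smul_vecMulVec hγ2.le x
  refine ⟨fun y => ?_, posDef_iff_dotProduct_mulVec.mpr ⟨?_, fun y hy => ?_⟩⟩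
  · have hmin := hA.isHermitian.le_dotProduct_mulVec
      (fun i => ciInf_le (Finite.bddBelow_range _) i) y
    calc (γ - 1) * (⨅ i, hA.isHermitian.eigenvalues i) * (∑ i, y i ^ 2)
        = (γ - 1) * ((⨅ i, hA.isHermitian.eigenvalues i) * (y ⬝ᵥ y)) := by
          simp only [dotProduct, sq, mul_assoc]
      _ ≤ (γ - 1) * (y ⬝ᵥ A *ᵥ y) := mul_le_mul_of_nonneg_left hmin (by linarith)
      _ ≤ _ := hcorr y
  · exact hA.isHermitian.add_smul_vecMulVec_self _ _
  · have hpos := hA.dotProduct_mulVec_pos hy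
    rw [star_trivial] at hpos ⊢
    calc 0 < (γ - 1) * (y ⬝ᵥ A *ᵥ y) := mul_pos (by linarith) hpos
      _ ≤ _ := hcorr y

/-- For a symmetric positive definite matrix `A` and `1 < γ < 2`, the rank-one corrected matrix
`A + (γ-2)(Ax)(Ax)ᵀ/(xᵀAx)` has quadratic form bounded below by `(γ-1)λ₁|y|²`, where `λ₁` is
the smallest eigenvalue of `A`; in particular it is positive definite. -/
theorem stmt_4 {n : ℕ} (A : Matrix (Fin n) (Fin n) ℝ) (hA : A.PosDef)
    (γ : ℝ) (hγ1 : 1 < γ) (hγ2 : γ < 2) (x : Fin n → ℝ) (hx : x ≠ 0) :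
    (∀ y : Fin n → ℝ,
      (γ - 1) * (⨅ i, hA.isHermitian.eigenvalues i) * (∑ i, y i ^ 2) ≤
        y ⬝ᵥ (A + ((γ - 2) / (x ⬝ᵥ A.mulVec x)) •
          vecMulVec (A.mulVec x) (A.mulVec x)).mulVec y) ∧
    (A + ((γ - 2) / (x ⬝ᵥ A.mulVec x)) • vecMulVec (A.mulVec x) (A.mulVec x)).PosDef :=
  stmt_4_general A hA γ hγ1 hγ2 x
end

section
/- Let H be a smooth real-valued function on a neighborhood U of the origin in ℝ^{d-1} with H(0) = 0, ∇H(0) = 0, and positive definite Hessian at 0, and let γ > 1. Then Φ(x) = H(x)^{γ/2} satisfies: for every multi-index α there exists a constant c_α such that |∂^α Φ(x)| ≤ c_α |x|^{γ - |α|} for all x ≠ 0 in a sufficiently small neighborhood of the origin. -/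
open Set Metric Filter Topology

set_option maxHeartbeats 1000000

section helpers

variable {E F : Type*} [NormedAddCommGroup E] [NormedSpace ℝ E]
  [NormedAddCommGroup F] [NormedSpace ℝ F]

/-- Uniform bound on iterated derivatives (within an open set) on a compact subset. -/
lemma derivBound {f : E → F} {s : Set E} (hs : IsOpen s) (hf : ContDiffOn ℝ (⊤ : ℕ∞) f s)
    {K : Set E} (hK : IsCompact K) (hKs : K ⊆ s) (k : ℕ) :
    ∃ C : ℝ, 0 ≤ C ∧ ∀ i ≤ k, ∀ x ∈ K, ‖iteratedFDerivWithin ℝ i f s x‖ ≤ C := by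
  have single : ∀ i : ℕ, ∃ C : ℝ, ∀ x ∈ K, ‖iteratedFDerivWithin ℝ i f s x‖ ≤ C := by
    intro i
    have hcont : ContinuousOn (fun x => iteratedFDerivWithin ℝ i f s x) s :=
      hf.continuousOn_iteratedFDerivWithin (by exact_mod_cast le_top) hs.uniqueDiffOn
    obtain ⟨C, hC⟩ := hK.exists_bound_of_continuousOn (hcont.mono hKs)
    exact ⟨C, hC⟩
  induction k with
  | zero =>
    obtain ⟨C, hC⟩ := single 0
    refine ⟨max C 0, le_max_right _ _, fun i hi x hx => ?_⟩
    interval_cases i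
    exact (hC x hx).trans (le_max_left _ _)
  | succ k IH =>
    obtain ⟨C, hC0, hC⟩ := IH
    obtain ⟨C', hC'⟩ := single (k + 1)
    refine ⟨max C (max C' 0), le_trans hC0 (le_max_left _ _), fun i hi x hx => ?_⟩
    rcases Nat.lt_succ_iff_lt_or_eq.1 (Nat.lt_succ_of_le hi) with h | h
    · exact (hC i (Nat.lt_succ_iff.1 h) x hx).trans (le_max_left _ _)
    · subst h
      exact (hC' x hx).trans ((le_max_left _ _).trans (le_max_right _ _))

/-- Norm of the iterated derivative of `f (ρ • ·)` in terms of that of `f`. -/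
lemma scaleBound [FiniteDimensional ℝ E] (f : E → F) {ρ : ℝ} (hρ : ρ ≠ 0) (x : E) (i : ℕ) :
    ‖iteratedFDeriv ℝ i (fun y => f (ρ • y)) x‖ ≤ |ρ| ^ i * ‖iteratedFDeriv ℝ i f (ρ • x)‖ := by
  let e : E ≃L[ℝ] E := (LinearEquiv.smulOfNeZero ℝ E ρ hρ).toContinuousLinearEquiv
  have hce : ∀ y, e y = ρ • y := fun y => by
    simp [e, LinearEquiv.coe_toContinuousLinearEquiv']
  have h1 : (fun y => f (ρ • y)) = f ∘ e := by funext y; simp [hce]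
  have key : iteratedFDeriv ℝ i (f ∘ e) x
      = (iteratedFDeriv ℝ i f (e x)).compContinuousLinearMap fun _ => (e : E →L[ℝ] E) := by
    rw [← iteratedFDerivWithin_univ, ← iteratedFDerivWithin_univ (f := f)]
    have h2 := ContinuousLinearEquiv.iteratedFDerivWithin_comp_right e f uniqueDiffOn_univ
      (x := x) (mem_univ _) i
    simpa using h2
  have hprod : ∏ _j : Fin i, ‖(e : E →L[ℝ] E)‖ ≤ |ρ| ^ i := by
    rw [Finset.prod_const]
    simp only [Finset.card_univ, Fintype.card_fin]
    have hb : ‖(e : E →L[ℝ] E)‖ ≤ |ρ| := by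
      refine ContinuousLinearMap.opNorm_le_bound _ (abs_nonneg ρ) fun y => ?_
      rw [show (e : E →L[ℝ] E) y = ρ • y from hce y, norm_smul, Real.norm_eq_abs]
    exact pow_le_pow_left₀ (norm_nonneg _) hb i
  calc ‖iteratedFDeriv ℝ i (fun y => f (ρ • y)) x‖
      = ‖(iteratedFDeriv ℝ i f (ρ • x)).compContinuousLinearMap fun _ => (e : E →L[ℝ] E)‖ := by
        rw [h1, key, hce x]
    _ ≤ ‖iteratedFDeriv ℝ i f (ρ • x)‖ * ∏ _j : Fin i, ‖(e : E →L[ℝ] E)‖ :=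
        ContinuousMultilinearMap.norm_compContinuousLinearMap_le _ _
    _ ≤ |ρ| ^ i * ‖iteratedFDeriv ℝ i f (ρ • x)‖ := by
        rw [mul_comm]
        exact mul_le_mul_of_nonneg_right hprod (norm_nonneg _)

end helpers

/-- If `H` is smooth near `0` with `H(0)=0`, `∇H(0)=0` and positive definite Hessian at `0`,
and `γ > 1`, then `Φ = H^{γ/2}` satisfies `|∂^α Φ(x)| ≤ c_α |x|^{γ-|α|}` for `x ≠ 0` near `0`,
formulated via iterated Fréchet derivatives. -/
theorem stmt_5 {n : ℕ} (U : Set (EuclideanSpace ℝ (Fin n))) (hU : IsOpen U)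
    (h0U : (0 : EuclideanSpace ℝ (Fin n)) ∈ U)
    (H : EuclideanSpace ℝ (Fin n) → ℝ) (hH : ContDiffOn ℝ (⊤ : ℕ∞) H U)
    (hH0 : H 0 = 0) (hgrad : fderiv ℝ H 0 = 0)
    (hHess : ∀ v : EuclideanSpace ℝ (Fin n), v ≠ 0 → 0 < iteratedFDeriv ℝ 2 H 0 ![v, v])
    (γ : ℝ) (hγ : 1 < γ) :
    ∀ k : ℕ, ∃ c : ℝ, ∃ r > (0 : ℝ), ∀ x : EuclideanSpace ℝ (Fin n), x ≠ 0 → ‖x‖ < r →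
      ‖iteratedFDeriv ℝ k (fun y => H y ^ (γ / 2)) x‖ ≤ c * ‖x‖ ^ (γ - (k : ℝ)) := by
  intro k
  rcases Nat.eq_zero_or_pos n with hn | hn
  · subst hn
    refine ⟨0, 1, one_pos, fun x hx _ => absurd (Subsingleton.elim x 0) hx⟩
  -- basic differentiability facts
  have hdiff : ∀ w ∈ U, DifferentiableAt ℝ H w := fun w hw =>
    (hH.contDiffAt (hU.mem_nhds hw)).differentiableAt (by simp)
  have hF : ∀ w ∈ U, DifferentiableAt ℝ (fderiv ℝ H) w := fun w hw =>
    (((hH.contDiffAt (hU.mem_nhds hw)).fderiv_right (m := 1) (WithTop.coe_le_coe.2 le_top)).differentiableAt one_ne_zero)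
  have hFc : ContinuousOn (fderiv ℝ (fderiv ℝ H)) U :=
    (hH.fderiv_of_isOpen hU (m := (⊤ : ℕ∞)) (by simp)).continuousOn_fderiv_of_isOpen hU (by simp)
  -- a closed ball inside U
  obtain ⟨ε, hε, hball⟩ := Metric.isOpen_iff.1 hU 0 h0U
  set r₂ : ℝ := ε / 2 with hr₂def
  have hr₂ : 0 < r₂ := by positivity
  have hball₂ : closedBall (0 : EuclideanSpace ℝ (Fin n)) r₂ ⊆ U :=
    (closedBall_subset_ball (by simp [hr₂def]; linarith)).trans hball
  -- bound on the second fderiv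
  obtain ⟨K₂, hK₂⟩ := (isCompact_closedBall (0 : EuclideanSpace ℝ (Fin n)) r₂).exists_bound_of_continuousOn
    (f := fderiv ℝ (fderiv ℝ H)) (by exact hFc.mono hball₂)
  -- P1 : gradient bound
  have hP1 : ∀ z ∈ closedBall (0 : EuclideanSpace ℝ (Fin n)) r₂, ‖fderiv ℝ H z‖ ≤ K₂ * ‖z‖ := by
    intro z hz
    have hseg : segment ℝ (0 : EuclideanSpace ℝ (Fin n)) z ⊆ closedBall 0 r₂ :=
      (convex_closedBall _ _).segment_subset (mem_closedBall_self hr₂.le) hz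
    have := Convex.norm_image_sub_le_of_norm_hasFDerivWithin_le
      (f := fderiv ℝ H) (f' := fderiv ℝ (fderiv ℝ H)) (s := segment ℝ 0 z)
      (fun w hw => ((hF w (hball₂ (hseg hw))).hasFDerivAt).hasFDerivWithinAt)
      (fun w hw => hK₂ w (hseg hw)) (convex_segment _ _)
      (left_mem_segment ℝ (0 : EuclideanSpace ℝ (Fin n)) z) (right_mem_segment ℝ (0 : EuclideanSpace ℝ (Fin n)) z)
    simpa [hgrad] using this
  have hK₂0 : 0 ≤ K₂ := le_trans (norm_nonneg _) (hK₂ 0 (mem_closedBall_self hr₂.le))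
  -- membership of segment points in smaller closed balls
  have hsegnorm : ∀ z : EuclideanSpace ℝ (Fin n), ∀ w ∈ segment ℝ (0 : EuclideanSpace ℝ (Fin n)) z, ‖w‖ ≤ ‖z‖ := by
    intro z w hw
    rcases hw with ⟨a, b, ha, hb, hab, rfl⟩
    have : ‖a • (0 : EuclideanSpace ℝ (Fin n)) + b • z‖ ≤ b * ‖z‖ := by
      simp [norm_smul, abs_of_nonneg hb]
    exact this.trans (by nlinarith [norm_nonneg z])
  -- P2 : upper bound for |H|
  have hP2 : ∀ z ∈ closedBall (0 : EuclideanSpace ℝ (Fin n)) r₂, |H z| ≤ K₂ * ‖z‖ ^ 2 := by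
    intro z hz
    have hzn : ‖z‖ ≤ r₂ := by simpa using hz
    have hsub : segment ℝ (0 : EuclideanSpace ℝ (Fin n)) z ⊆ closedBall 0 r₂ :=
      (convex_closedBall _ _).segment_subset (mem_closedBall_self hr₂.le) hz
    have := Convex.norm_image_sub_le_of_norm_hasFDerivWithin_le
      (f := H) (f' := fderiv ℝ H) (s := segment ℝ 0 z) (C := K₂ * ‖z‖)
      (fun w hw => ((hdiff w (hball₂ (hsub hw))).hasFDerivAt).hasFDerivWithinAt)
      (fun w hw => (hP1 w (hsub hw)).trans
        (mul_le_mul_of_nonneg_left (hsegnorm z w hw) hK₂0))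
      (convex_segment _ _) (left_mem_segment ℝ (0 : EuclideanSpace ℝ (Fin n)) z) (right_mem_segment ℝ (0 : EuclideanSpace ℝ (Fin n)) z)
    have h2 : |H z - H 0| ≤ K₂ * ‖z‖ * ‖z - 0‖ := by
      simpa [Real.norm_eq_abs] using this
    rw [hH0, sub_zero, sub_zero] at h2
    calc |H z| ≤ K₂ * ‖z‖ * ‖z‖ := h2
      _ = K₂ * ‖z‖ ^ 2 := by ring
  -- P3 : lower bound via positive definite Hessian
  set B := fderiv ℝ (fderiv ℝ H) 0 with hBdef
  have hBsymm : ∀ v w, B v w = B w v := by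
    intro v w
    refine second_derivative_symmetric_of_eventually (f := H) (f' := fderiv ℝ H) (x := 0) ?_ ?_ v w
    · filter_upwards [hU.mem_nhds h0U] with y hy using (hdiff y hy).hasFDerivAt
    · exact (hF 0 h0U).hasFDerivAt
  have hBQ : ∀ v, B v v = iteratedFDeriv ℝ 2 H 0 ![v, v] := by
    intro v
    rw [iteratedFDeriv_two_apply]
    simp [hBdef]
  -- minimum of the quadratic form on the sphere
  have hv1 : (EuclideanSpace.single (⟨0, hn⟩ : Fin n) (1 : ℝ)) ≠ 0 := by
    intro h
    have h1 : ‖EuclideanSpace.single (⟨0, hn⟩ : Fin n) (1 : ℝ)‖ = 1 := by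
      rw [EuclideanSpace.norm_single]; norm_num
    rw [h] at h1; simp at h1
  haveI : Nontrivial (EuclideanSpace ℝ (Fin n)) := ⟨⟨_, 0, hv1⟩⟩
  have hsph : (sphere (0 : EuclideanSpace ℝ (Fin n)) 1).Nonempty :=
    NormedSpace.sphere_nonempty.2 zero_le_one
  have hQcont : Continuous fun v : EuclideanSpace ℝ (Fin n) => B v v :=
    B.continuous.clm_apply continuous_id
  obtain ⟨v₀, hv₀mem, hv₀min⟩ :=
    (isCompact_sphere (0 : EuclideanSpace ℝ (Fin n)) 1).exists_isMinOn hsph hQcont.continuousOn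
  set m := B v₀ v₀ with hmdef
  have hv₀ne : v₀ ≠ 0 := by
    intro h
    rw [h] at hv₀mem
    simp at hv₀mem
  have hm : 0 < m := by rw [hmdef, hBQ]; exact hHess v₀ hv₀ne
  clear_value B m
  have hmQ : ∀ z : EuclideanSpace ℝ (Fin n), m * ‖z‖ ^ 2 ≤ B z z := by
    intro z
    rcases eq_or_ne z 0 with rfl | hz
    · simp
    have hzn : (0:ℝ) < ‖z‖ := norm_pos_iff.2 hz
    have hv : (‖z‖⁻¹ • z) ∈ sphere (0 : EuclideanSpace ℝ (Fin n)) 1 := by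
      simp [norm_smul, abs_of_nonneg (inv_nonneg.2 hzn.le), inv_mul_cancel₀ hzn.ne']
    have h1 : m ≤ B (‖z‖⁻¹ • z) (‖z‖⁻¹ • z) := by rw [hmdef]; exact hv₀min hv
    have h2 : B (‖z‖⁻¹ • z) (‖z‖⁻¹ • z) = ‖z‖⁻¹ * (‖z‖⁻¹ * B z z) := by
      rw [map_smul]; simp
    rw [h2] at h1
    have := mul_le_mul_of_nonneg_left h1 (le_of_lt (mul_pos hzn hzn))
    calc m * ‖z‖ ^ 2 = ‖z‖ * ‖z‖ * m := by ring
      _ ≤ ‖z‖ * ‖z‖ * (‖z‖⁻¹ * (‖z‖⁻¹ * B z z)) := this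
      _ = B z z := by field_simp
  -- continuity of second derivative near 0
  have hAcont : ContinuousAt (fderiv ℝ (fderiv ℝ H)) 0 := hFc.continuousAt (hU.mem_nhds h0U)
  obtain ⟨r₃, hr₃pos, hr₃le, hr₃⟩ :
      ∃ r₃ > (0:ℝ), r₃ ≤ r₂ ∧ ∀ w ∈ ball (0 : EuclideanSpace ℝ (Fin n)) r₃,
        ‖fderiv ℝ (fderiv ℝ H) w - B‖ ≤ m / 8 := by
    have hev : ∀ᶠ w in 𝓝 (0 : EuclideanSpace ℝ (Fin n)),
        ‖fderiv ℝ (fderiv ℝ H) w - B‖ < m / 8 := by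
      have h8 : 0 < m / 8 := by linarith
      have := hAcont (Metric.ball_mem_nhds (fderiv ℝ (fderiv ℝ H) 0) h8)
      filter_upwards [this] with w hw
      rw [mem_preimage, mem_ball, ← hBdef] at hw
      exact lt_of_eq_of_lt (dist_eq_norm (fderiv ℝ (fderiv ℝ H) w) B).symm hw
    rw [Metric.eventually_nhds_iff_ball] at hev
    obtain ⟨δ, hδ, hδh⟩ := hev
    exact ⟨min δ r₂, lt_min hδ hr₂, min_le_right _ _,
      fun w hw => (hδh w (mem_of_mem_of_subset hw (ball_subset_ball (min_le_left _ _)))).le⟩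
  have hballU : ball (0 : EuclideanSpace ℝ (Fin n)) r₃ ⊆ U :=
    (ball_subset_closedBall.trans (closedBall_subset_closedBall hr₃le)).trans hball₂
  -- gradient minus linear part
  have hG : ∀ z ∈ ball (0 : EuclideanSpace ℝ (Fin n)) r₃,
      ‖fderiv ℝ H z - B z‖ ≤ m / 8 * ‖z‖ := by
    intro z hz
    have hseg : segment ℝ (0 : EuclideanSpace ℝ (Fin n)) z ⊆ ball 0 r₃ :=
      (convex_ball _ _).segment_subset (mem_ball_self hr₃pos) hz
    have := Convex.norm_image_sub_le_of_norm_hasFDerivWithin_le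
      (f := fun w => fderiv ℝ H w - B w) (f' := fun w => fderiv ℝ (fderiv ℝ H) w - B)
      (s := segment ℝ 0 z) (C := m / 8)
      (fun w hw => (((hF w (hballU (hseg hw))).hasFDerivAt).sub (B.hasFDerivAt)).hasFDerivWithinAt)
      (fun w hw => hr₃ w (hseg hw)) (convex_segment _ _)
      (left_mem_segment ℝ (0 : EuclideanSpace ℝ (Fin n)) z)
      (right_mem_segment ℝ (0 : EuclideanSpace ℝ (Fin n)) z)
    simpa [hgrad] using this
  -- quadratic approximation
  have hψ : ∀ z ∈ ball (0 : EuclideanSpace ℝ (Fin n)) r₃,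
      |H z - 1 / 2 * B z z| ≤ m / 8 * ‖z‖ ^ 2 := by
    intro z hz
    have hseg : segment ℝ (0 : EuclideanSpace ℝ (Fin n)) z ⊆ ball 0 r₃ :=
      (convex_ball _ _).segment_subset (mem_ball_self hr₃pos) hz
    have hderiv : ∀ w ∈ segment ℝ (0 : EuclideanSpace ℝ (Fin n)) z,
        HasFDerivWithinAt (fun w => H w - 1 / 2 * B w w)
          (fderiv ℝ H w - B w) (segment ℝ 0 z) w := by
      intro w hw
      have h1 : HasFDerivAt H (fderiv ℝ H w) w := (hdiff w (hballU (hseg hw))).hasFDerivAt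
      have h2 : HasFDerivAt (fun z => B z z) ((B w).comp (ContinuousLinearMap.id ℝ _)
          + (B : _ →L[ℝ] _).flip w) w :=
        (B.hasFDerivAt (x := w)).clm_apply (hasFDerivAt_id w)
      have h3 := h1.sub (h2.const_mul (1 / 2 : ℝ))
      have heq : fderiv ℝ H w - (1 / 2 : ℝ) • ((B w).comp (ContinuousLinearMap.id ℝ _)
          + (B : _ →L[ℝ] _).flip w) = fderiv ℝ H w - B w := by
        ext v
        simp only [ContinuousLinearMap.sub_apply, ContinuousLinearMap.smul_apply,
          ContinuousLinearMap.add_apply, ContinuousLinearMap.comp_apply,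
          ContinuousLinearMap.coe_id', id_eq, ContinuousLinearMap.flip_apply,
          smul_eq_mul]
        rw [hBsymm v w]
        ring
      rw [heq] at h3
      exact h3.hasFDerivWithinAt
    have := Convex.norm_image_sub_le_of_norm_hasFDerivWithin_le
      (f := fun w => H w - 1 / 2 * B w w) (f' := fun w => fderiv ℝ H w - B w)
      (s := segment ℝ 0 z) (C := m / 8 * ‖z‖) hderiv
      (fun w hw => (hG w (hseg hw)).trans
        (mul_le_mul_of_nonneg_left (hsegnorm z w hw) (by linarith)))
      (convex_segment _ _) (left_mem_segment ℝ (0 : EuclideanSpace ℝ (Fin n)) z)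
      (right_mem_segment ℝ (0 : EuclideanSpace ℝ (Fin n)) z)
    have h4 : |H z - 1 / 2 * B z z - (H 0 - 1 / 2 * B 0 0)| ≤ m / 8 * ‖z‖ * ‖z - 0‖ := by
      simpa [Real.norm_eq_abs] using this
    rw [hH0] at h4
    simp only [map_zero, ContinuousLinearMap.zero_apply, mul_zero, sub_zero] at h4
    calc |H z - 1 / 2 * B z z| ≤ m / 8 * ‖z‖ * ‖z‖ := by simpa using h4
      _ = m / 8 * ‖z‖ ^ 2 := by ring
  have hlow : ∀ z ∈ ball (0 : EuclideanSpace ℝ (Fin n)) r₃, m / 4 * ‖z‖ ^ 2 ≤ H z := by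
    intro z hz
    have h1 := hψ z hz
    have h2 := hmQ z
    have h3 := (abs_le.1 h1).1
    have hs : 0 ≤ ‖z‖ ^ 2 := sq_nonneg _
    linarith [mul_nonneg hm.le hs]
  -- uniform bounds on derivatives of H
  obtain ⟨M, hM0, hM⟩ := derivBound hU hH
    (isCompact_closedBall (0 : EuclideanSpace ℝ (Fin n)) r₂) hball₂ k
  have hMfull : ∀ i ≤ k, ∀ z ∈ closedBall (0 : EuclideanSpace ℝ (Fin n)) r₂,
      ‖iteratedFDeriv ℝ i H z‖ ≤ M := by
    intro i hi z hz
    rw [← iteratedFDerivWithin_of_isOpen i hU (hball₂ hz)]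
    exact hM i hi z hz
  set c₀ : ℝ := m / 4 with hc₀def
  have hc₀ : 0 < c₀ := by rw [hc₀def]; linarith
  -- bounds for the rpow function
  have hgc : ContDiffOn ℝ (⊤ : ℕ∞) (fun t : ℝ => t ^ (γ / 2)) (Ioi (c₀ / 8)) := by
    intro t ht
    have ht' : (0:ℝ) < t := lt_trans (by linarith) (mem_Ioi.1 ht)
    exact (Real.contDiffAt_rpow_const_of_ne ht'.ne').contDiffWithinAt
  obtain ⟨C, hC0, hC⟩ := derivBound isOpen_Ioi hgc
    (isCompact_Icc (a := c₀ / 4) (b := K₂ + 1))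
    (fun t ht => mem_Ioi.2 (lt_of_lt_of_le (by linarith) ht.1)) k
  set D : ℝ := max 1 (max M K₂) with hDdef
  have hD1 : (1:ℝ) ≤ D := le_max_left _ _
  have hDM : M ≤ D := le_trans (le_max_left _ _) (le_max_right _ _)
  have hDK : K₂ ≤ D := le_trans (le_max_right _ _) (le_max_right _ _)
  refine ⟨(Nat.factorial k : ℝ) * C * D ^ k, min (r₃ / 2) 1, by positivity, fun x hx hxr => ?_⟩
  set ρ := ‖x‖ with hρdef
  have hρ : 0 < ρ := norm_pos_iff.2 hx
  have hρ1 : ρ < 1 := lt_of_lt_of_le hxr (min_le_right _ _)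
  have hρ3 : ρ < r₃ / 2 := lt_of_lt_of_le hxr (min_le_left _ _)
  have hρr₂ : ρ ≤ r₂ := by linarith
  set y₀ := ρ⁻¹ • x with hy₀def
  have hy₀ : ‖y₀‖ = 1 := by
    rw [hy₀def, norm_smul, Real.norm_eq_abs, abs_of_pos (inv_pos.2 hρ), ← hρdef]
    field_simp
  have hxy : ρ • y₀ = x := by rw [hy₀def, smul_inv_smul₀ hρ.ne']
  set sb := ball y₀ (1/2 : ℝ) with hsbdef
  have hy₀s : y₀ ∈ sb := mem_ball_self (by norm_num)
  have hys : ∀ y ∈ sb, 1/2 ≤ ‖y‖ ∧ ‖y‖ ≤ 3/2 := by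
    intro y hy
    have h1 : ‖y - y₀‖ < 1/2 := by rwa [hsbdef, mem_ball, dist_eq_norm] at hy
    have h2 : |‖y‖ - ‖y₀‖| ≤ ‖y - y₀‖ := abs_norm_sub_norm_le y y₀
    rw [hy₀] at h2
    have h3 := abs_le.1 h2
    constructor <;> linarith [h3.1, h3.2]
  have hρy : ∀ y ∈ sb, ρ • y ∈ ball (0 : EuclideanSpace ℝ (Fin n)) r₃ := by
    intro y hy
    rw [mem_ball, dist_zero_right, norm_smul, Real.norm_eq_abs, abs_of_pos hρ]
    have := (hys y hy).2
    nlinarith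
  -- the rescaled function
  set HS : EuclideanSpace ℝ (Fin n) → ℝ := fun y => H (ρ • y) with hHSdef
  set Hρ : EuclideanSpace ℝ (Fin n) → ℝ := ((ρ ^ 2)⁻¹ : ℝ) • HS with hHρdef
  have hHρapp : ∀ y, Hρ y = (ρ ^ 2)⁻¹ * H (ρ • y) := fun y => rfl
  have hsmooth0 : ContDiffOn ℝ (⊤ : ℕ∞) HS sb :=
    hH.comp ((contDiff_id.const_smul ρ).contDiffOn) (fun y hy => hballU (hρy y hy))
  have hHρfun : Hρ = fun y => ((ρ ^ 2)⁻¹ : ℝ) • HS y := rfl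
  have hHρsmooth : ContDiffOn ℝ (⊤ : ℕ∞) Hρ sb := by
    rw [hHρfun]; exact hsmooth0.const_smul _
  have hnsq : ∀ y : EuclideanSpace ℝ (Fin n), ‖ρ • y‖ ^ 2 = ρ ^ 2 * ‖y‖ ^ 2 := by
    intro y
    rw [norm_smul, Real.norm_eq_abs, abs_of_pos hρ]
    ring
  have hHρlow : ∀ y ∈ sb, c₀ * ‖y‖ ^ 2 ≤ Hρ y := by
    intro y hy
    have h5 := hlow (ρ • y) (hρy y hy)
    rw [hnsq y] at h5
    rw [hHρapp]
    rw [show c₀ * ‖y‖ ^ 2 = (ρ ^ 2)⁻¹ * (c₀ * (ρ ^ 2 * ‖y‖ ^ 2)) by field_simp]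
    exact mul_le_mul_of_nonneg_left h5 (by positivity)
  have hmaps : MapsTo Hρ sb (Ioi (c₀ / 8)) := by
    intro y hy
    have h6 := hHρlow y hy
    have h7 := (hys y hy).1
    have h7' : (1/4 : ℝ) ≤ ‖y‖ ^ 2 := by nlinarith [norm_nonneg y]
    have h7'' := mul_le_mul_of_nonneg_left h7' hc₀.le
    exact mem_Ioi.2 (by linarith)
  have hHρy₀low : c₀ ≤ Hρ y₀ := by
    have := hHρlow y₀ hy₀s
    rwa [hy₀, one_pow, mul_one] at this
  have hHρy₀upp : Hρ y₀ ≤ K₂ + 1 := by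
    rw [hHρapp, hxy]
    have h8 := hP2 x (by rw [mem_closedBall, dist_zero_right, ← hρdef]; exact hρr₂)
    have h9 : H x ≤ K₂ * ρ ^ 2 := le_trans (le_abs_self _) (by rwa [← hρdef] at h8)
    have : (ρ ^ 2)⁻¹ * H x ≤ (ρ ^ 2)⁻¹ * (K₂ * ρ ^ 2) :=
      mul_le_mul_of_nonneg_left h9 (by positivity)
    calc (ρ ^ 2)⁻¹ * H x ≤ (ρ ^ 2)⁻¹ * (K₂ * ρ ^ 2) := this
      _ = K₂ := by field_simp
      _ ≤ K₂ + 1 := by linarith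
  -- derivative bounds for Hρ
  have hD' : ∀ i, 1 ≤ i → i ≤ k → ‖iteratedFDerivWithin ℝ i Hρ sb y₀‖ ≤ D ^ i := by
    intro i h1i hik
    have e1 : iteratedFDerivWithin ℝ i Hρ sb y₀
        = ((ρ ^ 2)⁻¹ : ℝ) • iteratedFDerivWithin ℝ i HS sb y₀ :=
      iteratedFDerivWithin_const_smul_apply ((hsmooth0.of_le (WithTop.coe_le_coe.2 le_top)) y₀ hy₀s)
        isOpen_ball.uniqueDiffOn hy₀s
    have e2 : iteratedFDerivWithin ℝ i HS sb y₀ = iteratedFDeriv ℝ i HS y₀ :=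
      iteratedFDerivWithin_of_isOpen i isOpen_ball hy₀s
    have e3 : ‖iteratedFDeriv ℝ i HS y₀‖ ≤ |ρ| ^ i * ‖iteratedFDeriv ℝ i H x‖ := by
      have := scaleBound H hρ.ne' y₀ i
      rwa [hxy] at this
    have e4 : ‖iteratedFDerivWithin ℝ i Hρ sb y₀‖
        ≤ (ρ ^ 2)⁻¹ * (ρ ^ i * ‖iteratedFDeriv ℝ i H x‖) := by
      rw [e1, norm_smul, Real.norm_eq_abs, abs_of_pos (by positivity : (0:ℝ) < (ρ ^ 2)⁻¹), e2]
      refine mul_le_mul_of_nonneg_left ?_ (by positivity)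
      rwa [abs_of_pos hρ] at e3
    rcases eq_or_lt_of_le h1i with h1 | h2
    · -- i = 1
      have hi1 : i = 1 := h1.symm
      subst hi1
      have e5 : ‖iteratedFDeriv ℝ 1 H x‖ = ‖fderiv ℝ H x‖ := by
        rw [← norm_iteratedFDeriv_fderiv (n := 0)]
        exact norm_iteratedFDeriv_zero
      have e6 : ‖fderiv ℝ H x‖ ≤ K₂ * ρ := by
        have := hP1 x (by rw [mem_closedBall, dist_zero_right, ← hρdef]; exact hρr₂)
        rwa [← hρdef] at this
      calc ‖iteratedFDerivWithin ℝ 1 Hρ sb y₀‖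
          ≤ (ρ ^ 2)⁻¹ * (ρ ^ 1 * ‖iteratedFDeriv ℝ 1 H x‖) := e4
        _ ≤ (ρ ^ 2)⁻¹ * (ρ ^ 1 * (K₂ * ρ)) := by
            refine mul_le_mul_of_nonneg_left
              (mul_le_mul_of_nonneg_left (by rw [e5]; exact e6) (by positivity))
              (by positivity)
        _ = K₂ := by field_simp
        _ ≤ D ^ 1 := by rw [pow_one]; exact hDK
    · -- 2 ≤ i
      have h2i : 2 ≤ i := h2
      have e7 : ‖iteratedFDeriv ℝ i H x‖ ≤ M := hMfull i hik x
        (by rw [mem_closedBall, dist_zero_right, ← hρdef]; exact hρr₂)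
      have e8 : ρ ^ i ≤ ρ ^ 2 := pow_le_pow_of_le_one hρ.le hρ1.le h2i
      calc ‖iteratedFDerivWithin ℝ i Hρ sb y₀‖
          ≤ (ρ ^ 2)⁻¹ * (ρ ^ i * ‖iteratedFDeriv ℝ i H x‖) := e4
        _ ≤ (ρ ^ 2)⁻¹ * (ρ ^ 2 * M) := by
            refine mul_le_mul_of_nonneg_left ?_ (by positivity)
            exact mul_le_mul e8 e7 (norm_nonneg _) (by positivity)
        _ = M := by field_simp
        _ ≤ D := hDM
        _ = D ^ 1 := (pow_one D).symm
        _ ≤ D ^ i := pow_le_pow_right₀ hD1 h1i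
  have hC' : ∀ i ≤ k,
      ‖iteratedFDerivWithin ℝ i (fun t : ℝ => t ^ (γ / 2)) (Ioi (c₀ / 8)) (Hρ y₀)‖ ≤ C :=
    fun i hi => hC i hi _ ⟨by linarith, by linarith⟩
  -- the composition bound
  have hcomp : ‖iteratedFDerivWithin ℝ k ((fun t : ℝ => t ^ (γ / 2)) ∘ Hρ) sb y₀‖
      ≤ (Nat.factorial k : ℝ) * C * D ^ k :=
    norm_iteratedFDerivWithin_comp_le hgc hHρsmooth (WithTop.coe_le_coe.2 le_top) isOpen_Ioi.uniqueDiffOn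
      isOpen_ball.uniqueDiffOn hmaps hy₀s hC' hD'
  -- rescaled Φ
  set Ψ : EuclideanSpace ℝ (Fin n) → ℝ := fun y => H (ρ • y) ^ (γ / 2) with hΨdef
  have hΦΨ : (fun y => Ψ (ρ⁻¹ • y)) = fun y : EuclideanSpace ℝ (Fin n) => H y ^ (γ / 2) := by
    funext y
    simp only [hΨdef]
    rw [smul_inv_smul₀ hρ.ne']
  have step1 : ‖iteratedFDeriv ℝ k (fun y : EuclideanSpace ℝ (Fin n) => H y ^ (γ / 2)) x‖
      ≤ |ρ⁻¹| ^ k * ‖iteratedFDeriv ℝ k Ψ y₀‖ := by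
    rw [← hΦΨ]
    have := scaleBound Ψ (inv_ne_zero hρ.ne') x k
    rwa [← hy₀def] at this
  -- the constant identity
  have hsq : ((ρ ^ 2 : ℝ)) ^ (γ / 2 : ℝ) = ρ ^ γ := by
    rw [← Real.rpow_natCast ρ 2, ← Real.rpow_mul hρ.le]
    norm_num
    congr 1
    ring
  have hconst : ρ ^ (γ : ℝ) * ((ρ ^ 2)⁻¹ : ℝ) ^ (γ / 2 : ℝ) = 1 := by
    rw [Real.inv_rpow (by positivity), hsq]
    exact mul_inv_cancel₀ (Real.rpow_pos_of_pos hρ γ).ne'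
  -- eventual equality near y₀
  have hev : Ψ =ᶠ[𝓝 y₀] (ρ ^ γ : ℝ) • ((fun t : ℝ => t ^ (γ / 2)) ∘ Hρ) := by
    filter_upwards [isOpen_ball.mem_nhds hy₀s] with y hy
    have hHpos : 0 ≤ H (ρ • y) := le_trans (by positivity) (hlow (ρ • y) (hρy y hy))
    have hmul : (Hρ y) ^ (γ / 2 : ℝ)
        = ((ρ ^ 2)⁻¹ : ℝ) ^ (γ / 2 : ℝ) * (H (ρ • y)) ^ (γ / 2 : ℝ) := by
      rw [hHρapp, Real.mul_rpow (by positivity) hHpos]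
    show Ψ y = ρ ^ γ * ((Hρ y) ^ (γ / 2 : ℝ))
    rw [hmul, ← mul_assoc, hconst, one_mul]
  have hcd : ContDiffOn ℝ (⊤ : ℕ∞) ((fun t : ℝ => t ^ (γ / 2)) ∘ Hρ) sb := hgc.comp hHρsmooth hmaps
  have step2 : ‖iteratedFDeriv ℝ k Ψ y₀‖
      = ρ ^ γ * ‖iteratedFDerivWithin ℝ k ((fun t : ℝ => t ^ (γ / 2)) ∘ Hρ) sb y₀‖ := by
    have e1 : iteratedFDeriv ℝ k Ψ y₀
        = iteratedFDeriv ℝ k ((ρ ^ γ : ℝ) • ((fun t : ℝ => t ^ (γ / 2)) ∘ Hρ)) y₀ := by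
      rw [← iteratedFDerivWithin_univ, ← iteratedFDerivWithin_univ]
      refine Filter.EventuallyEq.iteratedFDerivWithin_eq ?_ ?_ k
      · rw [nhdsWithin_univ]; exact hev
      · exact hev.eq_of_nhds
    have e2 : iteratedFDeriv ℝ k ((ρ ^ γ : ℝ) • ((fun t : ℝ => t ^ (γ / 2)) ∘ Hρ)) y₀
        = iteratedFDerivWithin ℝ k ((ρ ^ γ : ℝ) • ((fun t : ℝ => t ^ (γ / 2)) ∘ Hρ)) sb y₀ :=
      (iteratedFDerivWithin_of_isOpen k isOpen_ball hy₀s).symm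
    have e3 : iteratedFDerivWithin ℝ k ((ρ ^ γ : ℝ) • ((fun t : ℝ => t ^ (γ / 2)) ∘ Hρ)) sb y₀
        = (ρ ^ γ : ℝ) • iteratedFDerivWithin ℝ k ((fun t : ℝ => t ^ (γ / 2)) ∘ Hρ) sb y₀ :=
      iteratedFDerivWithin_const_smul_apply ((hcd.of_le (WithTop.coe_le_coe.2 le_top)) y₀ hy₀s) isOpen_ball.uniqueDiffOn hy₀s
    rw [e1, e2, e3, norm_smul, Real.norm_eq_abs, abs_of_pos (Real.rpow_pos_of_pos hρ γ)]
  calc ‖iteratedFDeriv ℝ k (fun y : EuclideanSpace ℝ (Fin n) => H y ^ (γ / 2)) x‖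
      ≤ |ρ⁻¹| ^ k * ‖iteratedFDeriv ℝ k Ψ y₀‖ := step1
    _ = (ρ⁻¹) ^ k * (ρ ^ γ
        * ‖iteratedFDerivWithin ℝ k ((fun t : ℝ => t ^ (γ / 2)) ∘ Hρ) sb y₀‖) := by
        rw [step2, abs_of_pos (inv_pos.2 hρ)]
    _ ≤ (ρ⁻¹) ^ k * (ρ ^ γ * ((Nat.factorial k : ℝ) * C * D ^ k)) := by
        refine mul_le_mul_of_nonneg_left
          (mul_le_mul_of_nonneg_left hcomp (Real.rpow_pos_of_pos hρ γ).le) (by positivity)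
    _ = (Nat.factorial k : ℝ) * C * D ^ k * ρ ^ (γ - (k : ℝ)) := by
        rw [Real.rpow_sub hρ, Real.rpow_natCast]
        field_simp
        rw [mul_comm, ← mul_assoc, ← mul_pow, mul_one_div_cancel hρ.ne', one_pow, one_mul]
end

section
/- Let H be a smooth real-valued function on a neighborhood of the origin in ℝ^{d-1} with H(0) = 0, ∇H(0) = 0, and positive definite Hessian at the origin, and let γ > 1. Then there is a constant c > 0 and a neighborhood of the origin on which the smallest eigenvalue μ₁(x) of the Hessian of Φ(x) = H(x)^{γ/2} satisfies μ₁(x) ≥ c |x|^{γ-2} for all x ≠ 0. Equivalently, y^T Hess Φ(x) y ≥ c |x|^{γ-2} |y|² for all y. -/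
set_option maxHeartbeats 1000000

open Filter Topology

section helpers
variable {E : Type*} [NormedAddCommGroup E] [NormedSpace ℝ E]


/-- Chain rule formula for the second derivative of `H ^ p` where `H x > 0`. -/
lemma hess_rpow_formula {U : Set E} (hU : IsOpen U) {H : E → ℝ}
    (hH : ContDiffOn ℝ (⊤ : ℕ∞) H U) {x : E} (hx : x ∈ U) (hpos : 0 < H x) (p : ℝ) (y : E) :
    iteratedFDeriv ℝ 2 (fun z => H z ^ p) x ![y, y]
      = p * (p - 1) * H x ^ (p - 2) * (fderiv ℝ H x y) ^ 2
        + p * H x ^ (p - 1) * (fderiv ℝ (fderiv ℝ H) x y y) := by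
  have hcont : ContinuousAt H x := (hH.continuousOn.continuousAt (hU.mem_nhds hx))
  have hposev : ∀ᶠ z in 𝓝 x, 0 < H z := hcont (Ioi_mem_nhds hpos)
  have hdiff : DifferentiableOn ℝ H U := hH.differentiableOn (by simp)
  have hdH : ∀ᶠ z in 𝓝 x, HasFDerivAt H (fderiv ℝ H z) z := by
    filter_upwards [hU.mem_nhds hx] with z hz
    exact (hdiff.differentiableAt (hU.mem_nhds hz)).hasFDerivAt
  have hΦ' : fderiv ℝ (fun z => H z ^ p) =ᶠ[𝓝 x]
      fun z => (p * H z ^ (p - 1)) • fderiv ℝ H z := by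
    filter_upwards [hposev, hdH] with z hz hdz
    exact (hdz.rpow_const (Or.inl hz.ne')).fderiv
  rw [iteratedFDeriv_two_apply, hΦ'.fderiv_eq]
  have hdHx : HasFDerivAt H (fderiv ℝ H x) x := hdH.self_of_nhds
  have hc : HasFDerivAt (fun z => p * H z ^ (p - 1))
      ((p * ((p - 1) * H x ^ (p - 2))) • fderiv ℝ H x) x := by
    have := (hdHx.rpow_const (p := p - 1) (Or.inl hpos.ne')).const_mul p
    rw [smul_smul] at this
    rw [show p - 2 = p - 1 - 1 by ring]
    exact this
  have hL : HasFDerivAt (fderiv ℝ H) (fderiv ℝ (fderiv ℝ H) x) x := by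
    have h1 : ContDiffOn ℝ (⊤ : ℕ∞) (fderiv ℝ H) U := hH.fderiv_of_isOpen hU (by simp)
    exact ((h1.differentiableOn (by simp)).differentiableAt (hU.mem_nhds hx)).hasFDerivAt
  have hcs : HasFDerivAt (fun z => (p * H z ^ (p - 1)) • fderiv ℝ H z) _ x := hc.smul hL
  rw [hcs.fderiv]
  simp only [ContinuousLinearMap.add_apply, ContinuousLinearMap.smul_apply,
    ContinuousLinearMap.smulRight_apply, smul_eq_mul, Matrix.cons_val_zero, Matrix.cons_val_one, Matrix.head_cons]
  ring

lemma bilin_cauchy_schwarz (D : E →L[ℝ] E →L[ℝ] ℝ) (hsymm : ∀ v w, D v w = D w v)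
    (hnn : ∀ v, 0 ≤ D v v) (x y : E) : (D x y) ^ 2 ≤ D x x * D y y := by
  have key : ∀ t : ℝ, 0 ≤ D x x * (t * t) + 2 * D x y * t + D y y := by
    intro t
    have h := hnn (t • x + y)
    simp only [map_add, map_smul, ContinuousLinearMap.add_apply,
      ContinuousLinearMap.smul_apply, smul_eq_mul] at h
    rw [hsymm y x] at h
    nlinarith [h]
  have hd := discrim_le_zero key
  simp only [discrim] at hd
  nlinarith [hd]

lemma bilin_coercive [ProperSpace E] [Nontrivial E] (D : E →L[ℝ] E →L[ℝ] ℝ)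
    (hpos : ∀ v : E, v ≠ 0 → 0 < D v v) :
    ∃ lam > (0 : ℝ), ∀ y : E, lam * ‖y‖ ^ 2 ≤ D y y := by
  have hcont : Continuous fun v : E => D v v :=
    D.isBoundedBilinearMap.continuous.comp (continuous_id.prodMk continuous_id)
  obtain ⟨z, hz, hmin⟩ := (isCompact_sphere (0:E) 1).exists_isMinOn
    (NormedSpace.sphere_nonempty.2 zero_le_one) hcont.continuousOn
  have hz1 : ‖z‖ = 1 := by simpa using hz
  have hzne : z ≠ 0 := by intro h; rw [h] at hz1; simp at hz1
  refine ⟨D z z, hpos z hzne, fun y => ?_⟩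
  rcases eq_or_ne y 0 with rfl | hy
  · simp
  · set u : E := ‖y‖⁻¹ • y with hu
    have hny : (0:ℝ) < ‖y‖ := norm_pos_iff.2 hy
    have hus : u ∈ Metric.sphere (0:E) 1 := by
      simp [hu, norm_smul, abs_of_pos (inv_pos.2 hny), inv_mul_cancel₀ hny.ne']
    have hyu : y = ‖y‖ • u := by
      rw [hu, smul_smul, mul_inv_cancel₀ hny.ne', one_smul]
    have hDyy : D y y = ‖y‖ ^ 2 * D u u := by
      conv_lhs => rw [hyu]
      simp [map_smul, smul_eq_mul]
      ring
    have hmu : D z z ≤ D u u := hmin hus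
    rw [hDyy]
    nlinarith [sq_nonneg ‖y‖, hmu]

lemma key_ineq (γ lam Λ ε X Y a b s P h Q : ℝ)
    (hγ : 1 < γ) (hlam : 0 < lam) (hΛ : 0 < Λ)
    (hε0 : 0 < ε) (hε1 : ε ≤ lam/4)
    (hε2 : (2*Λ + lam) * ε ≤ (γ-1) * lam^2 / 16) (hε3 : ε ≤ (γ-1) * lam / 24)
    (hX : 0 ≤ X) (hY : 0 ≤ Y)
    (f1 : lam * X^2 ≤ a) (f2 : lam * Y^2 ≤ b)
    (f3 : s^2 ≤ a*b) (fs : |s| ≤ Λ*X*Y)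
    (f4 : |P - s| ≤ ε*X*Y) (f5 : |Q - b| ≤ ε*Y^2) (f6 : |h - a/2| ≤ ε*X^2) :
    min (1/8) ((γ-1)/4) * lam^2 * (X^2 * Y^2) ≤ (γ/2 - 1) * P^2 + h * Q := by
  obtain ⟨f4a, f4b⟩ := abs_le.1 f4
  obtain ⟨f5a, f5b⟩ := abs_le.1 f5
  obtain ⟨f6a, f6b⟩ := abs_le.1 f6
  have fsb := (abs_le.1 fs).2
  have ha : 0 ≤ a := le_trans (by positivity) f1
  have hb : 0 ≤ b := le_trans (by positivity) f2
  have hεX : ε * X^2 ≤ a / 4 := by nlinarith [sq_nonneg X]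
  have hεY : ε * Y^2 ≤ b / 4 := by nlinarith [sq_nonneg Y]
  have hh : a/4 ≤ h := by linarith
  have hQ : b - ε * Y^2 ≤ Q := by linarith
  have hQ0 : 0 ≤ b - ε * Y^2 := by linarith
  have hprod : (a/2 - ε * X^2) * (b - ε * Y^2) ≤ h * Q :=
    mul_le_mul (by linarith) hQ hQ0 (by linarith)
  have hab : lam^2 * (X^2 * Y^2) ≤ a * b := by
    calc lam^2 * (X^2 * Y^2) = (lam * X^2) * (lam * Y^2) := by ring
      _ ≤ a * b := mul_le_mul f1 f2 (by positivity) ha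
  have hT : (0:ℝ) ≤ X^2 * Y^2 := by positivity
  rcases le_or_gt 2 γ with hγ2 | hγ2
  · -- γ ≥ 2 : gradient term is nonnegative
    have h1 : 0 ≤ (γ/2 - 1) * P^2 := mul_nonneg (by linarith) (sq_nonneg P)
    have hmin : min (1/8) ((γ-1)/4) ≤ 1/8 := min_le_left _ _
    have e5 : (1/8) * (a*b) ≤ h*Q := by nlinarith [hprod, sq_nonneg X, sq_nonneg Y]
    calc min (1/8) ((γ-1)/4) * lam^2 * (X^2*Y^2)
        = min (1/8) ((γ-1)/4) * (lam^2 * (X^2*Y^2)) := by ring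
      _ ≤ (1/8) * (lam^2 * (X^2*Y^2)) := mul_le_mul_of_nonneg_right hmin (by positivity)
      _ ≤ (1/8) * (a*b) := by linarith
      _ ≤ (γ/2 - 1) * P^2 + h * Q := by linarith
  · -- 1 < γ < 2
    have hγ1 : 0 < γ - 1 := by linarith
    -- sharper bounds using hε3
    have w1 : ε * Y^2 ≤ (γ-1)/24 * b := by nlinarith [sq_nonneg Y]
    have w2 : ε * X^2 ≤ (γ-1)/24 * a := by nlinarith [sq_nonneg X]
    have hQK : a*b/2 - (γ-1)/16 * (a*b) ≤ h * Q := by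
      have e1 : (a/2) * (ε * Y^2) ≤ (a/2) * ((γ-1)/24 * b) :=
        mul_le_mul_of_nonneg_left w1 (by linarith)
      have e2 : (ε * X^2) * b ≤ ((γ-1)/24 * a) * b :=
        mul_le_mul_of_nonneg_right w2 hb
      nlinarith [hprod, mul_nonneg (mul_nonneg hε0.le (sq_nonneg X))
        (mul_nonneg hε0.le (sq_nonneg Y))]
    have hεXY : 0 ≤ ε*X*Y := by positivity
    have hP2 : P^2 ≤ a*b + (2*Λ + lam) * ε * (X^2*Y^2) := by
      have h1 : P^2 ≤ (|s| + ε*X*Y)^2 := by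
        rw [← sq_abs P]
        apply pow_le_pow_left₀ (abs_nonneg _)
        calc |P| = |s + (P - s)| := by ring_nf
          _ ≤ |s| + |P - s| := abs_add_le _ _
          _ ≤ |s| + ε*X*Y := by linarith
      have e6 : |s| * (ε*X*Y) ≤ (Λ*X*Y) * (ε*X*Y) := mul_le_mul_of_nonneg_right fs hεXY
      have hεlam : ε ≤ lam := by linarith
      have e7 : (ε*X*Y)^2 ≤ (lam*ε)*(X^2*Y^2) := by
        calc (ε*X*Y)^2 = (ε*ε)*(X^2*Y^2) := by ring
          _ ≤ (lam*ε)*(X^2*Y^2) :=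
            mul_le_mul_of_nonneg_right (by nlinarith) hT
      nlinarith [h1, sq_abs s, f3, e6, e7]
    have hg1 : (γ/2 - 1) * (a*b + (2*Λ + lam) * ε * (X^2*Y^2)) ≤ (γ/2 - 1) * P^2 :=
      mul_le_mul_of_nonpos_left hP2 (by linarith)
    have e_t : (1 - γ/2) * ((2*Λ + lam) * ε * (X^2*Y^2))
        ≤ (1/2) * ((γ-1) * lam^2 / 16 * (X^2*Y^2)) := by
      have e8 : (2*Λ + lam) * ε * (X^2*Y^2) ≤ (γ-1) * lam^2 / 16 * (X^2*Y^2) :=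
        mul_le_mul_of_nonneg_right hε2 hT
      have e9 : 0 ≤ (2*Λ + lam) * ε * (X^2*Y^2) := by positivity
      calc (1 - γ/2) * ((2*Λ + lam) * ε * (X^2*Y^2))
          ≤ (1/2) * ((2*Λ + lam) * ε * (X^2*Y^2)) :=
            mul_le_mul_of_nonneg_right (by linarith) e9
        _ ≤ (1/2) * ((γ-1) * lam^2 / 16 * (X^2*Y^2)) := by linarith
    have m3 : (γ-1) * (lam^2 * (X^2*Y^2)) ≤ (γ-1) * (a*b) :=
      mul_le_mul_of_nonneg_left hab hγ1.le
    have m4 : 0 ≤ (γ-1) * (lam^2 * (X^2*Y^2)) := by positivity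
    have hmin : min (1/8) ((γ-1)/4) ≤ (γ-1)/4 := min_le_right _ _
    calc min (1/8) ((γ-1)/4) * lam^2 * (X^2*Y^2)
        = min (1/8) ((γ-1)/4) * (lam^2 * (X^2*Y^2)) := by ring
      _ ≤ (γ-1)/4 * (lam^2 * (X^2*Y^2)) := mul_le_mul_of_nonneg_right hmin (by positivity)
      _ ≤ (γ/2 - 1) * P^2 + h * Q := by linarith [hg1, hQK, e_t, m3, m4]

lemma rpow_bound {h X lam Λ : ℝ} (hX : 0 < X) (hlam : 0 < lam) (hΛ : 0 < Λ)
    (h1 : lam * X^2 ≤ h) (h2 : h ≤ Λ * X^2) (e : ℝ) :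
    min (lam ^ e) (Λ ^ e) * X ^ (2*e) ≤ h ^ e := by
  have hh : 0 < h := lt_of_lt_of_le (by positivity) h1
  have hsq : ((X^2 : ℝ)) ^ e = X ^ (2*e) := by
    rw [← Real.rpow_natCast X 2, ← Real.rpow_mul hX.le]
    norm_num
  rcases le_or_gt 0 e with he | he
  · calc min (lam ^ e) (Λ ^ e) * X ^ (2*e) ≤ lam ^ e * X ^ (2*e) :=
        mul_le_mul_of_nonneg_right (min_le_left _ _) (Real.rpow_nonneg hX.le _)
      _ = (lam * X^2) ^ e := by
          rw [Real.mul_rpow hlam.le (by positivity), hsq]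
      _ ≤ h ^ e := Real.rpow_le_rpow (by positivity) h1 he
  · calc min (lam ^ e) (Λ ^ e) * X ^ (2*e) ≤ Λ ^ e * X ^ (2*e) :=
        mul_le_mul_of_nonneg_right (min_le_right _ _) (Real.rpow_nonneg hX.le _)
      _ = (Λ * X^2) ^ e := by
          rw [Real.mul_rpow hΛ.le (by positivity), hsq]
      _ ≤ h ^ e := Real.rpow_le_rpow_of_nonpos hh h2 he.le



lemma final_comb (γ lam Λ ε X Y a b s P h Q : ℝ)
    (hγ : 1 < γ) (hlam : 0 < lam) (hΛ : 0 < Λ) (hlamΛ : lam ≤ Λ)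
    (hε0 : 0 < ε) (hε1 : ε ≤ lam/4)
    (hε2 : (2*Λ + lam) * ε ≤ (γ-1) * lam^2 / 16) (hε3 : ε ≤ (γ-1) * lam / 24)
    (hX : 0 < X) (hY : 0 ≤ Y)
    (f1 : lam * X^2 ≤ a) (f2 : lam * Y^2 ≤ b)
    (f3 : s^2 ≤ a*b) (fs : |s| ≤ Λ*X*Y) (fa : a ≤ Λ*X^2)
    (f4 : |P - s| ≤ ε*X*Y) (f5 : |Q - b| ≤ ε*Y^2) (f6 : |h - a/2| ≤ ε*X^2) :
    γ/2 * min ((lam/4) ^ (γ/2-2)) (Λ ^ (γ/2-2)) * (min (1/8) ((γ-1)/4) * lam^2)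
      * X ^ (γ-2) * Y^2
      ≤ γ/2 * (γ/2 - 1) * h ^ (γ/2 - 2) * P^2 + γ/2 * h ^ (γ/2 - 1) * Q := by
  have key := key_ineq γ lam Λ ε X Y a b s P h Q hγ hlam hΛ hε0 hε1 hε2 hε3
    hX.le hY f1 f2 f3 fs f4 f5 f6
  obtain ⟨f6a, f6b⟩ := abs_le.1 f6
  have hεX2 : ε * X^2 ≤ (lam/4) * X^2 := mul_le_mul_of_nonneg_right hε1 (sq_nonneg X)
  have hlow : (lam/4) * X^2 ≤ h := by linarith
  have hlX : lam * X^2 ≤ Λ * X^2 := mul_le_mul_of_nonneg_right hlamΛ (sq_nonneg X)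
  have hupp : h ≤ Λ * X^2 := by linarith
  have hhpos : 0 < h := lt_of_lt_of_le (by positivity) hlow
  have hexp : h ^ (γ/2 - 1) = h ^ (γ/2 - 2) * h := by
    rw [show γ/2 - 1 = (γ/2 - 2) + 1 by ring, Real.rpow_add hhpos, Real.rpow_one]
  have hrp := rpow_bound (X := X) (lam := lam/4) (Λ := Λ) hX (by positivity) hΛ
    hlow hupp (γ/2 - 2)
  rw [show 2*(γ/2-2) = γ - 4 by ring] at hrp
  have hγ1 : (0:ℝ) < γ - 1 := by linarith
  have hKnn : (0:ℝ) ≤ min (1/8) ((γ-1)/4) * lam^2 * (X^2 * Y^2) := by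
    have h2 : (0:ℝ) < min (1/8) ((γ-1)/4) := lt_min (by norm_num) (by linarith)
    positivity
  have hγ2nn : (0:ℝ) ≤ γ/2 := by linarith
  have final : γ/2 * (min ((lam/4) ^ (γ/2-2)) (Λ ^ (γ/2-2)) * X ^ (γ-4))
      * (min (1/8) ((γ-1)/4) * lam^2 * (X^2 * Y^2))
      ≤ γ/2 * h ^ (γ/2-2) * ((γ/2 - 1) * P^2 + h * Q) := by
    apply mul_le_mul _ key hKnn
      (mul_nonneg hγ2nn (Real.rpow_nonneg hhpos.le _))
    exact mul_le_mul_of_nonneg_left hrp hγ2nn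
  have hXe : X ^ (γ-4) * X^2 = X ^ (γ-2) := by
    rw [← Real.rpow_natCast X 2, ← Real.rpow_add hX]
    congr 1
    push_cast
    ring
  calc γ/2 * min ((lam/4) ^ (γ/2-2)) (Λ ^ (γ/2-2)) * (min (1/8) ((γ-1)/4) * lam^2)
        * X ^ (γ-2) * Y^2
      = γ/2 * (min ((lam/4) ^ (γ/2-2)) (Λ ^ (γ/2-2)) * X ^ (γ-4))
        * (min (1/8) ((γ-1)/4) * lam^2 * (X^2 * Y^2)) := by
        rw [← hXe]; ring
    _ ≤ γ/2 * h ^ (γ/2-2) * ((γ/2 - 1) * P^2 + h * Q) := final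
    _ = γ/2 * (γ/2 - 1) * h ^ (γ/2 - 2) * P^2 + γ/2 * h ^ (γ/2 - 1) * Q := by
        rw [hexp]; ring

end helpers

/-- If `H` is smooth near `0` with `H(0)=0`, `∇H(0)=0` and positive definite Hessian at `0`,
and `γ > 1`, then the Hessian quadratic form of `Φ = H^{γ/2}` satisfies
`yᵀ Hess Φ(x) y ≥ c |x|^{γ-2} |y|²` for `x ≠ 0` near the origin. -/
theorem stmt_6 {n : ℕ} (U : Set (EuclideanSpace ℝ (Fin n))) (hU : IsOpen U)
    (h0U : (0 : EuclideanSpace ℝ (Fin n)) ∈ U)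
    (H : EuclideanSpace ℝ (Fin n) → ℝ) (hH : ContDiffOn ℝ (⊤ : ℕ∞) H U)
    (hH0 : H 0 = 0) (hgrad : fderiv ℝ H 0 = 0)
    (hHess : ∀ v : EuclideanSpace ℝ (Fin n), v ≠ 0 → 0 < iteratedFDeriv ℝ 2 H 0 ![v, v])
    (γ : ℝ) (hγ : 1 < γ) :
    ∃ c > (0 : ℝ), ∃ r > (0 : ℝ), ∀ x : EuclideanSpace ℝ (Fin n), x ≠ 0 → ‖x‖ < r →
      ∀ y : EuclideanSpace ℝ (Fin n),
        c * ‖x‖ ^ (γ - 2) * ‖y‖ ^ 2 ≤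
          iteratedFDeriv ℝ 2 (fun z => H z ^ (γ / 2)) x ![y, y] := by
  rcases subsingleton_or_nontrivial (EuclideanSpace ℝ (Fin n)) with hsub | hnt
  · exact ⟨1, one_pos, 1, one_pos, fun x hx _ => absurd (Subsingleton.elim x 0) hx⟩
  have hHdiff : DifferentiableOn ℝ H U := hH.differentiableOn (by simp)
  set g := fderiv ℝ H with hgdef
  have hg : ContDiffOn ℝ (⊤ : ℕ∞) g U := hH.fderiv_of_isOpen hU (by simp)
  have hgdiff : DifferentiableOn ℝ g U := hg.differentiableOn (by simp)
  set D := fderiv ℝ g 0 with hDdef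
  have hgd0 : HasFDerivAt g D 0 := (hgdiff.differentiableAt (hU.mem_nhds h0U)).hasFDerivAt
  have hHd : ∀ z ∈ U, HasFDerivAt H (g z) z := fun z hz =>
    (hHdiff.differentiableAt (hU.mem_nhds hz)).hasFDerivAt
  have hsymm : ∀ v w, D v w = D w v := fun v w =>
    second_derivative_symmetric_of_eventually
      (by filter_upwards [hU.mem_nhds h0U] with z hz using hHd z hz) hgd0 v w
  have hDpos : ∀ v : EuclideanSpace ℝ (Fin n), v ≠ 0 → 0 < D v v := by
    intro v hv
    have h2 := hHess v hv
    rw [iteratedFDeriv_two_apply] at h2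
    simpa using h2
  obtain ⟨lam, hlam, hco⟩ := bilin_coercive D hDpos
  have hDnn : ∀ v, 0 ≤ D v v := fun v => le_trans (by positivity) (hco v)
  set Λ := ‖D‖ + 1 with hΛdef
  have hΛ : 0 < Λ := by positivity
  have hlamΛ : lam ≤ Λ := by
    obtain ⟨v, hv⟩ := exists_ne (0 : EuclideanSpace ℝ (Fin n))
    have h1 := hco v
    have h2 : D v v ≤ ‖D‖ * ‖v‖^2 := by
      calc D v v ≤ |D v v| := le_abs_self _
        _ = ‖(D v) v‖ := rfl
        _ ≤ ‖D v‖ * ‖v‖ := (D v).le_opNorm v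
        _ ≤ (‖D‖ * ‖v‖) * ‖v‖ :=
            mul_le_mul_of_nonneg_right (D.le_opNorm v) (norm_nonneg v)
        _ = ‖D‖ * ‖v‖^2 := by ring
    have hv2 : (0:ℝ) < ‖v‖^2 := pow_pos (norm_pos_iff.2 hv) 2
    have : lam * ‖v‖^2 ≤ (‖D‖+1) * ‖v‖^2 := by nlinarith [h1, h2]
    exact le_of_mul_le_mul_right (by simpa [hΛdef] using this) hv2
  -- choose epsilon
  set ε := min (lam/4) (min ((γ-1)*lam^2/(16*(2*Λ+lam))) ((γ-1)*lam/24)) with hεdef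
  have hγ1 : (0:ℝ) < γ - 1 := by linarith
  have hεa : 0 < (γ-1)*lam^2/(16*(2*Λ+lam)) :=
    div_pos (mul_pos hγ1 (by positivity)) (by positivity)
  have hεb : 0 < (γ-1)*lam/24 := div_pos (mul_pos hγ1 hlam) (by norm_num)
  have hε0 : 0 < ε := lt_min (by positivity) (lt_min hεa hεb)
  have hε1 : ε ≤ lam/4 := min_le_left _ _
  have hε2 : (2*Λ + lam) * ε ≤ (γ-1) * lam^2 / 16 := by
    have h1 : ε ≤ (γ-1)*lam^2/(16*(2*Λ+lam)) := le_trans (min_le_right _ _) (min_le_left _ _)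
    rw [le_div_iff₀ (by positivity)] at h1
    nlinarith [h1]
  have hε3 : ε ≤ (γ-1) * lam / 24 := le_trans (min_le_right _ _) (min_le_right _ _)
  -- eventual bounds near 0
  have hU0 : U ∈ 𝓝 (0 : EuclideanSpace ℝ (Fin n)) := hU.mem_nhds h0U
  have N2 : ∀ᶠ x in 𝓝 (0 : EuclideanSpace ℝ (Fin n)), ‖fderiv ℝ g x - D‖ ≤ ε := by
    have hcont : ContinuousAt (fderiv ℝ g) 0 :=
      ((hg.fderiv_of_isOpen hU (by simp) : ContDiffOn ℝ (⊤ : ℕ∞) (fderiv ℝ g) U)).continuousOn.continuousAt hU0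
    have hmem := hcont (Metric.closedBall_mem_nhds D hε0)
    filter_upwards [hmem] with x hx
    rw [Set.mem_preimage, Metric.mem_closedBall] at hx
    exact le_trans (le_of_eq (dist_eq_norm (fderiv ℝ g x) D).symm) hx
  have N3 : ∀ᶠ x in 𝓝 (0 : EuclideanSpace ℝ (Fin n)), ‖g x - D x‖ ≤ ε * ‖x‖ := by
    have h0 : g 0 = 0 := hgrad
    have hlo := hgd0.isLittleO.def hε0
    filter_upwards [hlo] with x hx
    simpa [h0, sub_zero] using hx
  obtain ⟨r, hr, hB⟩ := Metric.eventually_nhds_iff_ball.1 (((hU.eventually_mem h0U).and N2).and N3)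
  -- second-order Taylor bound for H via the mean value inequality
  have N4 : ∀ x : EuclideanSpace ℝ (Fin n), ‖x‖ < r → |H x - 2⁻¹ * D x x| ≤ ε * ‖x‖^2 := by
    intro x hxr
    have hsub : Metric.closedBall (0 : EuclideanSpace ℝ (Fin n)) ‖x‖ ⊆ Metric.ball 0 r :=
      Metric.closedBall_subset_ball hxr
    have hderivg0 : ∀ z ∈ Metric.closedBall (0 : EuclideanSpace ℝ (Fin n)) ‖x‖,
        HasFDerivWithinAt (fun w => H w - 2⁻¹ * D w w) (g z - D z)
          (Metric.closedBall 0 ‖x‖) z := by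
      intro z hz
      have hzU : z ∈ U := ((hB z (hsub hz)).1).1
      have h1 : HasFDerivAt H (g z) z := hHd z hzU
      have h2 := D.hasFDerivAt_of_bilinear (hasFDerivAt_id z) (hasFDerivAt_id z)
      have h3 := h1.sub (h2.const_mul (2⁻¹ : ℝ))
      have heq : g z - D z =
          g z - (2⁻¹ : ℝ) • (D.precompR (EuclideanSpace ℝ (Fin n)) z (ContinuousLinearMap.id ℝ _)
            + D.precompL (EuclideanSpace ℝ (Fin n)) (ContinuousLinearMap.id ℝ _) z) := by
        ext w
        simp [ContinuousLinearMap.precompR, ContinuousLinearMap.precompL, hsymm z w]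
        ring
      rw [heq]
      exact h3.hasFDerivWithinAt
    have hbound : ∀ z ∈ Metric.closedBall (0 : EuclideanSpace ℝ (Fin n)) ‖x‖,
        ‖g z - D z‖ ≤ ε * ‖x‖ := by
      intro z hz
      have h1 := (hB z (hsub hz)).2
      have hz' : ‖z‖ ≤ ‖x‖ := by simpa [dist_zero_right] using hz
      calc ‖g z - D z‖ ≤ ε * ‖z‖ := h1
        _ ≤ ε * ‖x‖ := mul_le_mul_of_nonneg_left hz' hε0.le
    have hmvt := Convex.norm_image_sub_le_of_norm_hasFDerivWithin_le hderivg0 hbound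
      (convex_closedBall _ _) (Metric.mem_closedBall_self (norm_nonneg x))
      (show x ∈ Metric.closedBall (0 : EuclideanSpace ℝ (Fin n)) ‖x‖ from
        Metric.mem_closedBall.2 (by simp [dist_zero_right]))
    simp only [hH0, map_zero, ContinuousLinearMap.zero_apply, mul_zero, sub_zero] at hmvt
    calc |H x - 2⁻¹ * D x x| = ‖H x - 2⁻¹ * D x x‖ := (Real.norm_eq_abs _).symm
      _ ≤ ε * ‖x‖ * ‖x‖ := hmvt
      _ = ε * ‖x‖^2 := by ring
  -- the constant
  have hc0 : 0 < γ/2 * min ((lam/4) ^ (γ/2-2)) (Λ ^ (γ/2-2)) * (min (1/8) ((γ-1)/4) * lam^2) := by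
    have h1 : 0 < min ((lam/4) ^ (γ/2-2)) (Λ ^ (γ/2-2)) :=
      lt_min (Real.rpow_pos_of_pos (by positivity) _) (Real.rpow_pos_of_pos hΛ _)
    have h2 : (0:ℝ) < min (1/8) ((γ-1)/4) := lt_min (by norm_num) (by linarith)
    have h3 : (0:ℝ) < γ/2 := by linarith
    exact mul_pos (mul_pos h3 h1) (mul_pos h2 (pow_pos hlam 2))
  refine ⟨γ/2 * min ((lam/4) ^ (γ/2-2)) (Λ ^ (γ/2-2)) * (min (1/8) ((γ-1)/4) * lam^2),
    hc0, r, hr, ?_⟩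
  intro x hx0 hxr y
  have hxball : x ∈ Metric.ball (0 : EuclideanSpace ℝ (Fin n)) r := by
    simpa [Metric.mem_ball, dist_zero_right] using hxr
  obtain ⟨⟨hxU, hf5'⟩, hf4'⟩ := hB x hxball
  have hX : (0:ℝ) < ‖x‖ := norm_pos_iff.2 hx0
  have hDle : ‖D‖ ≤ Λ := by rw [hΛdef]; linarith
  have f3 : (D x y)^2 ≤ D x x * D y y := bilin_cauchy_schwarz D hsymm hDnn x y
  have fs : |D x y| ≤ Λ * ‖x‖ * ‖y‖ := by
    calc |D x y| = ‖(D x) y‖ := rfl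
      _ ≤ ‖D x‖ * ‖y‖ := (D x).le_opNorm y
      _ ≤ (‖D‖ * ‖x‖) * ‖y‖ := mul_le_mul_of_nonneg_right (D.le_opNorm x) (norm_nonneg y)
      _ ≤ Λ * ‖x‖ * ‖y‖ := by
          have h2 := mul_le_mul_of_nonneg_right hDle
            (mul_nonneg (norm_nonneg x) (norm_nonneg y))
          calc ‖D‖ * ‖x‖ * ‖y‖ = ‖D‖ * (‖x‖*‖y‖) := by ring
            _ ≤ Λ * (‖x‖*‖y‖) := h2
            _ = Λ * ‖x‖ * ‖y‖ := by ring
  have fa : D x x ≤ Λ * ‖x‖^2 := by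
    calc D x x ≤ |D x x| := le_abs_self _
      _ = ‖(D x) x‖ := rfl
      _ ≤ ‖D x‖ * ‖x‖ := (D x).le_opNorm x
      _ ≤ (‖D‖ * ‖x‖) * ‖x‖ := mul_le_mul_of_nonneg_right (D.le_opNorm x) (norm_nonneg x)
      _ ≤ Λ * ‖x‖^2 := by
          have h2 := mul_le_mul_of_nonneg_right hDle (sq_nonneg ‖x‖)
          nlinarith [sq_nonneg ‖x‖, h2]
  have f4 : |g x y - D x y| ≤ ε * ‖x‖ * ‖y‖ := by
    calc |g x y - D x y| = ‖(g x - D x) y‖ := by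
          simp [ContinuousLinearMap.sub_apply, Real.norm_eq_abs]
      _ ≤ ‖g x - D x‖ * ‖y‖ := (g x - D x).le_opNorm y
      _ ≤ (ε * ‖x‖) * ‖y‖ := mul_le_mul_of_nonneg_right hf4' (norm_nonneg y)
      _ = ε * ‖x‖ * ‖y‖ := by ring
  have f5 : |fderiv ℝ g x y y - D y y| ≤ ε * ‖y‖^2 := by
    calc |fderiv ℝ g x y y - D y y| = ‖((fderiv ℝ g x - D) y) y‖ := by
          simp [ContinuousLinearMap.sub_apply, Real.norm_eq_abs]
      _ ≤ ‖(fderiv ℝ g x - D) y‖ * ‖y‖ := ((fderiv ℝ g x - D) y).le_opNorm y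
      _ ≤ (‖fderiv ℝ g x - D‖ * ‖y‖) * ‖y‖ :=
          mul_le_mul_of_nonneg_right ((fderiv ℝ g x - D).le_opNorm y) (norm_nonneg y)
      _ ≤ (ε * ‖y‖) * ‖y‖ :=
          mul_le_mul_of_nonneg_right
            (mul_le_mul_of_nonneg_right hf5' (norm_nonneg y)) (norm_nonneg y)
      _ = ε * ‖y‖^2 := by ring
  have f6 : |H x - D x x / 2| ≤ ε * ‖x‖^2 := by
    have h1 := N4 x hxr
    rwa [show (2:ℝ)⁻¹ * D x x = D x x / 2 by ring] at h1
  -- positivity of H x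
  have hεX2 : ε * ‖x‖^2 ≤ (lam/4) * ‖x‖^2 := mul_le_mul_of_nonneg_right hε1 (sq_nonneg ‖x‖)
  have hhpos : 0 < H x := by
    have h6 := (abs_le.1 f6).1
    have := hco x
    have hp : (0:ℝ) < (lam/4) * ‖x‖^2 := mul_pos (by linarith) (pow_pos hX 2)
    linarith [h6, hco x, hεX2]
  have formula := hess_rpow_formula hU hH hxU hhpos (γ/2) y
  rw [formula]
  exact final_comb γ lam Λ ε ‖x‖ ‖y‖ (D x x) (D y y) (D x y) (g x y) (H x)
    (fderiv ℝ g x y y) hγ hlam hΛ hlamΛ hε0 hε1 hε2 hε3 hX (norm_nonneg y)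
    (hco x) (hco y) f3 fs fa f4 f5 f6
end

section
/- Let d ≥ 2 and suppose for all k ≥ 0 that a_k ≤ c 2^{-k(d-1)} (2^{-kγ}|s| + 2^{-k}|ξ|)^{-(d-1)/2} with γ > 2 and ξ ≠ 0, s ≠ 0. Then Σ_{k=0}^∞ a_k ≤ C |ξ|^{-(d-1)(γ-2)/(2(γ-1))} |s|^{-(d-1)/(2(γ-1))}. -/
/-!
Write `e = (d - 1) / 2`. Dropping one of the two summands inside the bracket bounds the `k`-th
term both by `c |s|^{-e} 2^{(γ-2)e k}` and by `c |ξ|^{-e} 2^{-e k}`. A nonnegative sequence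
dominated by `P 2^{α k}` and by `Q 2^{-β k}` has sum `≲ P^{β/(α+β)} Q^{α/(α+β)}`: split it at the
index where the two bounds cross and sum each side as a geometric series from its largest term.
Here `α + β = (γ - 1) e`, so the crossing is at `2^k ≈ (|s|/|ξ|)^{1/(γ-1)}`, and the weights
`α/(α+β)` and `β/(α+β)` produce the exponents of `|ξ|` and `|s|`.
-/

open Real

theorem tsum_le_of_geometric_on_both_sides {a : ℕ → ℝ} {M ρ σ : ℝ} {K : ℕ} (ha : ∀ k, 0 ≤ a k)
    (hρ₀ : 0 ≤ ρ) (hρ₁ : ρ < 1) (hσ₀ : 0 ≤ σ) (hσ₁ : σ < 1)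
    (head : ∀ k < K, a k ≤ M * ρ ^ (K - 1 - k)) (tail : ∀ j, a (j + K) ≤ M * σ ^ j) :
    ∑' k, a k ≤ M * ((1 - ρ)⁻¹ + (1 - σ)⁻¹) := by
  have hM : 0 ≤ M := by simpa using (ha (0 + K)).trans (tail 0)
  have hgeom : Summable fun j : ℕ => M * σ ^ j := (summable_geometric_of_lt_one hσ₀ hσ₁).mul_left M
  have htail : Summable fun j => a (j + K) := hgeom.of_nonneg_of_le (fun j => ha _) tail
  rw [← ((summable_nat_add_iff K).mp htail).sum_add_tsum_nat_add K, mul_add]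
  gcongr
  · calc ∑ k ∈ Finset.range K, a k ≤ ∑ k ∈ Finset.range K, M * ρ ^ (K - 1 - k) :=
          Finset.sum_le_sum fun k hk => head k (Finset.mem_range.mp hk)
      _ = M * ∑ j ∈ Finset.Ico 0 K, ρ ^ j := by
          rw [Finset.sum_range_reflect (fun j => M * ρ ^ j), ← Finset.mul_sum, Finset.range_eq_Ico]
      _ ≤ M * (1 - ρ)⁻¹ := by
          gcongr
          simpa using geom_sum_Ico_le_of_lt_one hρ₀ hρ₁ (m := 0) (n := K)
  · calc ∑' j, a (j + K) ≤ ∑' j : ℕ, M * σ ^ j := htail.tsum_le_tsum tail hgeom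
      _ = M * (1 - σ)⁻¹ := by rw [tsum_mul_left, tsum_geometric_of_lt_one hσ₀ hσ₁]

theorem tsum_le_of_le_two_rpow_min {a : ℕ → ℝ} {α β τ M : ℝ} (hα : 0 < α) (hβ : 0 < β)
    (ha : ∀ k, 0 ≤ a k) (hgrow : ∀ k : ℕ, a k ≤ M * 2 ^ (α * (k - τ)))
    (hdecay : ∀ k : ℕ, a k ≤ M * 2 ^ (-β * (k - τ))) :
    ∑' k, a k ≤ M * ((1 - 2 ^ (-α))⁻¹ + (1 - 2 ^ (-β))⁻¹) := by
  have hM : 0 ≤ M := nonneg_of_mul_nonneg_left ((ha 0).trans (hgrow 0)) (by positivity)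
  have two_rpow_neg_lt_one {x : ℝ} (hx : 0 < x) : (2 : ℝ) ^ (-x) < 1 :=
    rpow_lt_one_of_one_lt_of_neg one_lt_two (neg_lt_zero.mpr hx)
  refine tsum_le_of_geometric_on_both_sides (K := ⌈τ⌉₊) ha (by positivity)
    (two_rpow_neg_lt_one hα) (by positivity) (two_rpow_neg_lt_one hβ) (fun k hk => ?_) (fun j => ?_)
  · have hkτ : (k : ℝ) < τ := Nat.lt_ceil.mp hk
    have hKτ : (⌈τ⌉₊ : ℝ) < τ + 1 := Nat.ceil_lt_add_one (by linarith [k.cast_nonneg (α := ℝ)])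
    have hcast : ((⌈τ⌉₊ - 1 - k : ℕ) : ℝ) = ⌈τ⌉₊ - 1 - k := by
      rw [Nat.sub_sub, Nat.cast_sub (by omega)]; push_cast; ring
    calc a k ≤ M * 2 ^ (α * (k - τ)) := hgrow k
      _ ≤ M * 2 ^ (-α * (⌈τ⌉₊ - 1 - k : ℕ)) := by
          gcongr M * (2 : ℝ) ^ ?_
          · norm_num
          · rw [hcast]; nlinarith
      _ = M * (2 ^ (-α)) ^ (⌈τ⌉₊ - 1 - k) := by rw [rpow_mul_natCast zero_le_two]
  · calc a (j + ⌈τ⌉₊) ≤ M * 2 ^ (-β * ((j + ⌈τ⌉₊ : ℕ) - τ)) := hdecay _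
      _ ≤ M * 2 ^ (-β * j) := by
          gcongr M * (2 : ℝ) ^ ?_
          · norm_num
          · push_cast; nlinarith [Nat.le_ceil τ]
      _ = M * (2 ^ (-β)) ^ j := by rw [rpow_mul_natCast zero_le_two]

theorem tsum_le_of_le_min_two_rpow {a : ℕ → ℝ} {α β P Q : ℝ} (hα : 0 < α) (hβ : 0 < β)
    (ha : ∀ k, 0 ≤ a k) (hgrow : ∀ k : ℕ, a k ≤ P * 2 ^ (α * k))
    (hdecay : ∀ k : ℕ, a k ≤ Q * 2 ^ (-(β * k))) :
    ∑' k, a k ≤ ((1 - 2 ^ (-α))⁻¹ + (1 - 2 ^ (-β))⁻¹) * P ^ (β / (α + β)) * Q ^ (α / (α + β)) := by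
  have hP : 0 ≤ P := by simpa using (ha 0).trans (hgrow 0)
  have hQ : 0 ≤ Q := by simpa using (ha 0).trans (hdecay 0)
  by_cases hPQ : P = 0 ∨ Q = 0
  · have hzero : a = 0 := funext fun k => le_antisymm (by
      rcases hPQ with rfl | rfl
      exacts [by simpa using hgrow k, by simpa using hdecay k]) (ha k)
    have hρ (x : ℝ) (hx : 0 < x) : 0 ≤ (1 - (2 : ℝ) ^ (-x))⁻¹ :=
      inv_nonneg.mpr (sub_nonneg.mpr (rpow_le_one_of_one_le_of_nonpos one_le_two (by linarith)))
    have := add_nonneg (hρ α hα) (hρ β hβ)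
    simp only [hzero, Pi.zero_apply, tsum_zero]
    positivity
  obtain ⟨hP₀, hQ₀⟩ := not_or.mp hPQ
  obtain ⟨p, rfl⟩ : ∃ p : ℝ, (2 : ℝ) ^ p = P :=
    ⟨logb 2 P, rpow_logb two_pos (by norm_num) (hP.lt_of_ne' hP₀)⟩
  obtain ⟨q, rfl⟩ : ∃ q : ℝ, (2 : ℝ) ^ q = Q :=
    ⟨logb 2 Q, rpow_logb two_pos (by norm_num) (hQ.lt_of_ne' hQ₀)⟩
  have hαβ : α + β ≠ 0 := by positivity
  -- in base-2 logarithms the two bounds are lines in `k`, crossing at `k = (q - p) / (α + β)`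
  convert tsum_le_of_le_two_rpow_min (τ := (q - p) / (α + β)) (M := 2 ^ ((β * p + α * q) / (α + β)))
    hα hβ ha (fun k => ?_) (fun k => ?_) using 1
  · rw [← rpow_mul zero_le_two, ← rpow_mul zero_le_two, mul_assoc, ← rpow_add two_pos, mul_comm]
    congr 2
    field_simp
  · convert hgrow k using 1
    rw [← rpow_add two_pos, ← rpow_add two_pos]
    congr 1
    field_simp
    ring
  · convert hdecay k using 1
    rw [← rpow_add two_pos, ← rpow_add two_pos]
    congr 1
    field_simp
    ring

theorem mul_two_rpow_mul_rpow_add_le_left {c x γ m A B : ℝ} (hc : 0 ≤ c) (hm : 0 ≤ m)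
    (hA : 0 < A) (hB : 0 ≤ B) :
    c * 2 ^ (-x * m) * (2 ^ (-x * γ) * A + 2 ^ (-x) * B) ^ (-m / 2) ≤
      c * A ^ (-m / 2) * 2 ^ ((γ - 2) * (m / 2) * x) := by
  rw [mul_assoc, mul_assoc]
  gcongr c * ?_
  calc 2 ^ (-x * m) * (2 ^ (-x * γ) * A + 2 ^ (-x) * B) ^ (-m / 2)
      ≤ 2 ^ (-x * m) * (2 ^ (-x * γ) * A) ^ (-m / 2) := by
        gcongr 2 ^ (-x * m) * ?_
        exact rpow_le_rpow_of_nonpos (by positivity) (le_add_of_nonneg_right (by positivity))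
          (by linarith)
    _ = A ^ (-m / 2) * 2 ^ ((γ - 2) * (m / 2) * x) := by
        rw [mul_rpow (by positivity) hA.le, ← rpow_mul zero_le_two, mul_left_comm, ← mul_assoc,
          ← rpow_add two_pos, mul_comm]
        ring_nf

theorem mul_two_rpow_mul_rpow_add_le_right {c x γ m A B : ℝ} (hc : 0 ≤ c) (hm : 0 ≤ m)
    (hA : 0 ≤ A) (hB : 0 < B) :
    c * 2 ^ (-x * m) * (2 ^ (-x * γ) * A + 2 ^ (-x) * B) ^ (-m / 2) ≤
      c * B ^ (-m / 2) * 2 ^ (-(m / 2 * x)) := by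
  rw [mul_assoc, mul_assoc]
  gcongr c * ?_
  calc 2 ^ (-x * m) * (2 ^ (-x * γ) * A + 2 ^ (-x) * B) ^ (-m / 2)
      ≤ 2 ^ (-x * m) * (2 ^ (-x) * B) ^ (-m / 2) := by
        gcongr 2 ^ (-x * m) * ?_
        exact rpow_le_rpow_of_nonpos (by positivity) (le_add_of_nonneg_left (by positivity))
          (by linarith)
    _ = B ^ (-m / 2) * 2 ^ (-(m / 2 * x)) := by
        rw [mul_rpow (by positivity) hB.le, ← rpow_mul zero_le_two, mul_left_comm, ← mul_assoc,
          ← rpow_add two_pos, mul_comm]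
        ring_nf

theorem mul_rpow_mul_mul_rpow_of_add_eq_one {c x y u v : ℝ} (hc : 0 ≤ c) (hx : 0 ≤ x) (hy : 0 ≤ y)
    (huv : u + v = 1) : (c * x) ^ u * (c * y) ^ v = c * x ^ u * y ^ v := by
  rw [mul_rpow hc hx, mul_rpow hc hy, mul_mul_mul_comm, ← rpow_add' hc (by rw [huv]; norm_num),
    huv, rpow_one, mul_assoc]

/-- Dyadic summation: if `a_k ≤ c 2^{-k(d-1)} (2^{-kγ}|s| + 2^{-k}|ξ|)^{-(d-1)/2}` with `γ > 2`,
then `∑ a_k ≤ C |ξ|^{-(d-1)(γ-2)/(2(γ-1))} |s|^{-(d-1)/(2(γ-1))}`. -/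
theorem stmt_10 (d : ℕ) (hd : 2 ≤ d) (γ c : ℝ) (hγ : 2 < γ) (hc : 0 ≤ c) :
    ∃ C : ℝ, ∀ s ξ : ℝ, s ≠ 0 → ξ ≠ 0 → ∀ a : ℕ → ℝ, (∀ k, 0 ≤ a k) →
      (∀ k, a k ≤ c * (2 : ℝ) ^ (-(k : ℝ) * ((d : ℝ) - 1)) *
        ((2 : ℝ) ^ (-(k : ℝ) * γ) * |s| + (2 : ℝ) ^ (-(k : ℝ)) * |ξ|) ^ (-((d : ℝ) - 1) / 2)) →
      ∑' k, a k ≤ C * |ξ| ^ (-((d : ℝ) - 1) * (γ - 2) / (2 * (γ - 1))) *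
        |s| ^ (-((d : ℝ) - 1) / (2 * (γ - 1))) := by
  set m : ℝ := (d : ℝ) - 1
  have hm : 0 < m := by
    have : (2 : ℝ) ≤ d := by exact_mod_cast hd
    linarith
  have hα : 0 < (γ - 2) * (m / 2) := mul_pos (by linarith) (half_pos hm)
  refine ⟨c * ((1 - 2 ^ (-((γ - 2) * (m / 2))))⁻¹ + (1 - 2 ^ (-(m / 2)))⁻¹),
    fun s ξ hs hξ a ha hbound => ?_⟩
  have hs : 0 < |s| := abs_pos.mpr hs
  have hξ : 0 < |ξ| := abs_pos.mpr hξ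
  have hsum := tsum_le_of_le_min_two_rpow hα (half_pos hm) ha
    (fun k => (hbound k).trans (mul_two_rpow_mul_rpow_add_le_left hc hm.le hs (abs_nonneg ξ)))
    (fun k => (hbound k).trans (mul_two_rpow_mul_rpow_add_le_right hc hm.le (abs_nonneg s) hξ))
  have hγ1 : γ - 1 ≠ 0 := by linarith
  have hweight : (γ - 2) * (m / 2) + m / 2 = (γ - 1) * (m / 2) := by ring
  rw [hweight, div_mul_cancel_right₀ (half_pos hm).ne', mul_div_mul_right _ _ (half_pos hm).ne',
    mul_assoc, mul_rpow_mul_mul_rpow_of_add_eq_one hc (by positivity) (by positivity)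
      (by field_simp; ring), ← rpow_mul hs.le, ← rpow_mul hξ.le] at hsum
  refine hsum.trans_eq ?_
  rw [show -m / 2 * (γ - 1)⁻¹ = -m / (2 * (γ - 1)) by field_simp, div_mul_div_comm]
  ring
end

section
/- Let γ > 2 and δ < 2/(γ-2), and let α, β be reals with 0 < |α| ≤ |β| such that ‖n α/β‖ ≥ c₀ |n|^{-1-δ} for all nonzero integers n, where ‖x‖ denotes the distance from x to the nearest integer. Then the sum Σ over integer pairs (m,n) with 0 < |−βm + αn| < 1/2 of |−βm+αn|^{-(γ-2)/(γ-1)} |αm+βn|^{-1/(γ-1)-2} is finite. -/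
/-!
Write `x = -βm + αn` and `y = αm + βn`. The Diophantine condition bounds `|x|` below by
`c₀ |β| |n|^(-1-δ)`, and the identity `β y = (α² + β²) n - α x` shows `|y| ≳ |n|` once
`|x| ≤ 1/2` and `|n|` is not too small. So all but finitely many terms are `O(|n|^s)` with
`s = (1+δ)(γ-2)/(γ-1) - 1/(γ-1) - 2`, which is `< -1` exactly when `δ < 2/(γ-2)`. Since
`|x| ≤ 1/2` confines `m` to a window of bounded width around `round (n α/β)`, the sum is dominated
by a multiple of `∑ₙ |n|^s`.
-/

theorem rpow_mul_rpow_le_of_nonpos {x y a b t p e₁ e₂ : ℝ} (ha : 0 < a) (hb : 0 < b)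
    (ht : 0 < t) (he₁ : e₁ ≤ 0) (he₂ : e₂ ≤ 0) (hx : a * t ^ p ≤ x) (hy : b * t ≤ y) :
    x ^ e₁ * y ^ e₂ ≤ a ^ e₁ * b ^ e₂ * t ^ (p * e₁ + e₂) := by
  have hx₀ : 0 < a * t ^ p := by positivity
  have hy₀ : 0 < b * t := by positivity
  calc x ^ e₁ * y ^ e₂ ≤ (a * t ^ p) ^ e₁ * (b * t) ^ e₂ :=
        mul_le_mul (Real.rpow_le_rpow_of_nonpos hx₀ hx he₁)
          (Real.rpow_le_rpow_of_nonpos hy₀ hy he₂)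
          (Real.rpow_nonneg (hy₀.trans_le hy).le _) (by positivity)
    _ = a ^ e₁ * b ^ e₂ * t ^ (p * e₁ + e₂) := by
        rw [Real.mul_rpow ha.le (by positivity), Real.mul_rpow hb.le ht.le, ← Real.rpow_mul ht.le,
          Real.rpow_add ht]
        ring

theorem summable_ite_abs_sub_le {f : ℤ → ℝ} (hf : Summable f) (k : ℤ → ℤ) (K : ℤ) :
    Summable fun q : ℤ × ℤ => if |q.1 - k q.2| ≤ K then f q.2 else 0 := by
  let shear : ℤ × ℤ ≃ ℤ × ℤ :=
    ⟨fun q => (q.1 + k q.2, q.2), fun q => (q.1 - k q.2, q.2), fun q => by simp, fun q => by simp⟩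
  have hband : Summable fun j : ℤ => ‖if |j| ≤ K then (1 : ℝ) else 0‖ := by
    refine summable_of_hasFiniteSupport <| show Set.Finite _ from
      (Set.finite_Icc (-K) K).subset fun j hj => ?_
    by_contra h
    exact hj (by simp [abs_le.not.mpr h])
  refine (shear.summable_iff).mp ((summable_mul_of_summable_norm hband hf.norm).congr fun q => ?_)
  simp [shear]

theorem exponent_lt_neg_one {γ δ : ℝ} (hγ : 2 < γ) (hδ : δ < 2 / (γ - 2)) :
    (-1 - δ) * (-(γ - 2) / (γ - 1)) + (-(1 / (γ - 1)) - 2) < -1 := by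
  have hδ' : δ * (γ - 2) < 2 := (lt_div_iff₀ (by linarith)).mp hδ
  have hγ₁ : 0 < γ - 1 := by linarith
  rw [show (-1 - δ) * (-(γ - 2) / (γ - 1)) + (-(1 / (γ - 1)) - 2)
      = ((1 + δ) * (γ - 2) - 1 - 2 * (γ - 1)) / (γ - 1) by field_simp; ring, div_lt_iff₀ hγ₁]
  nlinarith

section

variable {α β : ℝ}

theorem abs_neg_mul_add_mul_eq (hβ : β ≠ 0) (m n : ℝ) :
    |-β * m + α * n| = |β| * |n * (α / β) - m| := by
  rw [← abs_mul]
  congr 1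
  field_simp
  ring

theorem abs_mul_abs_sub_round_le (hβ : β ≠ 0) (m : ℤ) (n : ℝ) :
    |β| * |n * (α / β) - round (n * (α / β))| ≤ |-β * m + α * n| := by
  rw [abs_neg_mul_add_mul_eq hβ]
  exact mul_le_mul_of_nonneg_left (round_le _ _) (abs_nonneg β)

theorem abs_sub_round_le_of_abs_neg_mul_add_mul_le (hβ : β ≠ 0) {r : ℝ} (m : ℤ) (n : ℝ)
    (h : |-β * m + α * n| ≤ r) : |(m : ℝ) - round (n * (α / β))| ≤ r / |β| + 1 / 2 := by
  rw [abs_neg_mul_add_mul_eq hβ, ← le_div_iff₀' (abs_pos.mpr hβ)] at h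
  calc |(m : ℝ) - round (n * (α / β))|
      ≤ |(m : ℝ) - n * (α / β)| + |n * (α / β) - round (n * (α / β))| := abs_sub_le _ _ _
    _ ≤ r / |β| + 1 / 2 := add_le_add (by rwa [abs_sub_comm]) (abs_sub_round _)

theorem mul_abs_le_abs_mul_add_mul (hβ : β ≠ 0) {m n : ℝ} (hx : |-β * m + α * n| ≤ 1 / 2)
    (hn : |α| ≤ (α ^ 2 + β ^ 2) * |n|) :
    (α ^ 2 + β ^ 2) / (2 * |β|) * |n| ≤ |α * m + β * n| := by
  have hβ₀ : 0 < |β| := abs_pos.mpr hβ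
  have hrot : β * (α * m + β * n) = (α ^ 2 + β ^ 2) * n - α * (-β * m + α * n) := by ring
  have hlower := abs_sub_abs_le_abs_sub ((α ^ 2 + β ^ 2) * n) (α * (-β * m + α * n))
  rw [← hrot, abs_mul, abs_mul, abs_mul, abs_of_nonneg (by positivity)] at hlower
  rw [div_mul_eq_mul_div, div_le_iff₀ (by positivity)]
  nlinarith [mul_le_mul_of_nonneg_left hx (abs_nonneg α)]

theorem finite_setOf_abs_neg_mul_add_mul_le (hβ : β ≠ 0) (r N : ℝ) :
    {q : ℤ × ℤ | |-β * q.1 + α * q.2| ≤ r ∧ |(q.2 : ℝ)| ≤ N}.Finite := by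
  set R := ⌈(r + |α| * N) / |β|⌉
  refine (Set.finite_Icc ((-R, -⌈N⌉) : ℤ × ℤ) (R, ⌈N⌉)).subset ?_
  rintro ⟨m, n⟩ ⟨hx, hn⟩
  have hm : |(m : ℝ)| ≤ (r + |α| * N) / |β| := by
    rw [le_div_iff₀' (abs_pos.mpr hβ), ← abs_mul]
    calc |β * m| = |α * n - (-β * m + α * n)| := by ring_nf
      _ ≤ |α| * |(n : ℝ)| + |-β * m + α * n| := by rw [← abs_mul]; exact abs_sub _ _
      _ ≤ r + |α| * N := by nlinarith [mul_le_mul_of_nonneg_left hn (abs_nonneg α)]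
  have hm' : |m| ≤ R := by exact_mod_cast hm.trans (Int.le_ceil _)
  have hn' : |n| ≤ ⌈N⌉ := by exact_mod_cast hn.trans (Int.le_ceil _)
  simp only [Set.mem_Icc, Prod.mk_le_mk]
  obtain ⟨hm₁, hm₂⟩ := abs_le.mp hm'
  obtain ⟨hn₁, hn₂⟩ := abs_le.mp hn'
  exact ⟨⟨hm₁, hn₁⟩, hm₂, hn₂⟩

theorem abs_rpow_mul_abs_rpow_le (hβ : β ≠ 0) {c₀ p e₁ e₂ : ℝ} (hc₀ : 0 < c₀) (he₁ : e₁ ≤ 0)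
    (he₂ : e₂ ≤ 0) {m n : ℤ}
    (hdio : c₀ * |(n : ℝ)| ^ p ≤ |(n : ℝ) * (α / β) - round ((n : ℝ) * (α / β))|)
    (hx : |-β * m + α * n| ≤ 1 / 2) (hn : |α| < (α ^ 2 + β ^ 2) * |(n : ℝ)|) :
    |-β * m + α * n| ^ e₁ * |α * m + β * n| ^ e₂ ≤
      (c₀ * |β|) ^ e₁ * ((α ^ 2 + β ^ 2) / (2 * |β|)) ^ e₂ * |(n : ℝ)| ^ (p * e₁ + e₂) := by
  have hβ₀ : 0 < |β| := abs_pos.mpr hβ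
  have hn₀ : 0 < |(n : ℝ)| := pos_of_mul_pos_right ((abs_nonneg α).trans_lt hn) (by positivity)
  refine rpow_mul_rpow_le_of_nonpos (by positivity) (by positivity) hn₀ he₁ he₂ ?_
    (mul_abs_le_abs_mul_add_mul hβ hx hn.le)
  calc c₀ * |β| * |(n : ℝ)| ^ p = |β| * (c₀ * |(n : ℝ)| ^ p) := by ring
    _ ≤ _ := (mul_le_mul_of_nonneg_left hdio hβ₀.le).trans (abs_mul_abs_sub_round_le hβ m n)

end

/-- Diophantine summability: if `γ > 2`, `δ < 2/(γ-2)`, `0 < |α| ≤ |β|`, and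
`‖n α/β‖ ≥ c₀ |n|^{-1-δ}` for all nonzero integers `n` (distance to the nearest integer),
then the sum over integer pairs `(m,n)` with `0 < |−βm+αn| < 1/2` of
`|−βm+αn|^{-(γ-2)/(γ-1)} |αm+βn|^{-1/(γ-1)-2}` is finite. -/
theorem stmt_14 (γ δ α β c₀ : ℝ) (hγ : 2 < γ) (hδ : δ < 2 / (γ - 2))
    (hα : 0 < |α|) (hαβ : |α| ≤ |β|) (hc₀ : 0 < c₀)
    (hdio : ∀ n : ℤ, n ≠ 0 →
      c₀ * |(n : ℝ)| ^ (-1 - δ) ≤ |(n : ℝ) * (α / β) - round ((n : ℝ) * (α / β))|) :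
    Summable (fun p : {q : ℤ × ℤ //
        0 < |(-β) * (q.1 : ℝ) + α * (q.2 : ℝ)| ∧ |(-β) * (q.1 : ℝ) + α * (q.2 : ℝ)| < 1 / 2} =>
      |(-β) * (p.1.1 : ℝ) + α * (p.1.2 : ℝ)| ^ (-(γ - 2) / (γ - 1)) *
      |α * (p.1.1 : ℝ) + β * (p.1.2 : ℝ)| ^ (-(1 / (γ - 1)) - 2)) := by
  have hβ : β ≠ 0 := abs_pos.mp (hα.trans_le hαβ)
  have he₁ : -(γ - 2) / (γ - 1) ≤ 0 := div_nonpos_of_nonpos_of_nonneg (by linarith) (by linarith)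
  have he₂ : -(1 / (γ - 1)) - 2 ≤ 0 := by linarith [one_div_pos.mpr (by linarith : 0 < γ - 1)]
  set s := (-1 - δ) * (-(γ - 2) / (γ - 1)) + (-(1 / (γ - 1)) - 2)
  set C := (c₀ * |β|) ^ (-(γ - 2) / (γ - 1)) * ((α ^ 2 + β ^ 2) / (2 * |β|)) ^ (-(1 / (γ - 1)) - 2)
  have hpow : Summable fun n : ℤ => |(n : ℝ)| ^ s := by
    simpa only [neg_neg] using
      Real.summable_abs_int_rpow (b := -s) (by linarith [exponent_lt_neg_one hγ hδ])
  have hband : Summable fun q : ℤ × ℤ =>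
      if |q.1 - round ((q.2 : ℝ) * (α / β))| ≤ ⌈1 / 2 / |β| + 1 / 2⌉ then C * |(q.2 : ℝ)| ^ s
      else 0 :=
    summable_ite_abs_sub_le (hpow.mul_left C) (fun n => round ((n : ℝ) * (α / β))) _
  refine Summable.of_norm_bounded_eventually (hband.comp_injective Subtype.val_injective) ?_
  filter_upwards [((finite_setOf_abs_neg_mul_add_mul_le hβ (1 / 2) (|α| / (α ^ 2 + β ^ 2))
    ).preimage Subtype.val_injective.injOn).compl_mem_cofinite] with ⟨⟨m, n⟩, hS⟩ hsmall
  have hn : |α| < (α ^ 2 + β ^ 2) * |(n : ℝ)| := by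
    by_contra h
    exact hsmall ⟨hS.2.le, by rw [le_div_iff₀' (by positivity)]; exact not_lt.mp h⟩
  have hnear : |m - round ((n : ℝ) * (α / β))| ≤ ⌈1 / 2 / |β| + 1 / 2⌉ := by
    exact_mod_cast (abs_sub_round_le_of_abs_neg_mul_add_mul_le hβ m n hS.2.le).trans
      (Int.le_ceil _)
  have hn₀ : n ≠ 0 := by rintro rfl; simpa using (abs_nonneg α).trans_lt hn
  rw [Real.norm_of_nonneg (by positivity)]
  simp only [Function.comp_apply, if_pos hnear]
  exact abs_rpow_mul_abs_rpow_le hβ hc₀ he₁ he₂ (hdio n hn₀) hS.2.le hn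
end

section
/- Let φ: [0,1] → ℝ be continuous with a smooth extension, let Ψ be a diffeomorphism between neighborhoods of the origin in ℝ^{d-1} with Jacobian determinant J_Ψ, and let H be smooth with H(Ψ(y)) = |y|² near 0, H(0)=0, ∇H(0)=0, Hess H(0) positive definite. Define S(t) = |{x ∈ ℝ^{d-1} : H(x)^{γ/2} ≤ t}| for γ > 1 and t > 0 small. Then S(t) = t^{(d-1)/γ} G(t^{1/γ}) where G(r) = ∫_{|u|≤1} J_Ψ(ru) du is smooth, and G(0) equals the (d-1)-dimensional Lebesgue measure of the ellipsoid {x : (1/2) x^T Hess H(0) x ≤ 1}. -/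
open MeasureTheory Metric Filter Set Pointwise
open scoped NNReal ENNReal
set_option maxHeartbeats 1000000



theorem aux18_analyticAt_det {E : Type*} [NormedAddCommGroup E] [NormedSpace ℝ E]
    [FiniteDimensional ℝ E] (f0 : E →L[ℝ] E) :
    AnalyticAt ℝ (fun f : E →L[ℝ] E => f.det) f0 := by
  classical
  set m := Module.finrank ℝ E with hm
  set b : Module.Basis (Fin m) ℝ E := Module.finBasis ℝ E with hb
  have h1 : AnalyticAt ℝ (fun f : E →L[ℝ] E =>
      ∑ σ : Equiv.Perm (Fin m), ((Equiv.Perm.sign σ : ℤ) : ℝ) *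
        ∏ i, b.repr (f (b i)) (σ i)) f0 := by
    apply Finset.analyticAt_fun_sum
    intro σ _
    apply AnalyticAt.mul analyticAt_const
    apply Finset.analyticAt_fun_prod
    intro i _
    have h2 : AnalyticAt ℝ
        (⇑((LinearMap.toContinuousLinearMap (b.coord (σ i))).comp
          (ContinuousLinearMap.apply ℝ E (b i)))) f0 :=
      ContinuousLinearMap.analyticAt _ f0
    refine h2.congr (Filter.Eventually.of_forall fun f => ?_)
    simp [Module.Basis.coord_apply]
  refine h1.congr (Filter.Eventually.of_forall fun f => ?_)
  show _ = (f : E →L[ℝ] E).det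
  have : (f : E →L[ℝ] E).det = LinearMap.det (f : E →ₗ[ℝ] E) := rfl
  rw [this, ← LinearMap.det_toMatrix b, Matrix.det_apply]
  refine Finset.sum_congr rfl fun σ _ => ?_
  rw [Units.smul_def, zsmul_eq_mul]
  push_cast
  congr 1
  refine Finset.prod_congr rfl fun i _ => ?_
  rw [LinearMap.toMatrix_apply]
  rfl

/-- Morse-lemma computation of the slice area function: if `Ψ` is a diffeomorphism between
neighborhoods of `0` with `H(Ψ(y)) = |y|²`, `H(0)=0`, `∇H(0)=0`, `Hess H(0)` positive
definite, then `S(t) = |{x : H(x)^{γ/2} ≤ t}| = t^{(d-1)/γ} G(t^{1/γ})` with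
`G(r) = ∫_{|u|≤1} J_Ψ(ru) du` smooth near `0`, and `G(0)` the measure of the ellipsoid
`{x : (1/2) xᵀ Hess H(0) x ≤ 1}`. -/
theorem stmt_18 {n : ℕ} (γ : ℝ) (hγ : 1 < γ)
    (V W : Set (EuclideanSpace ℝ (Fin n))) (hV : IsOpen V) (hW : IsOpen W)
    (h0V : (0 : EuclideanSpace ℝ (Fin n)) ∈ V)
    (Ψ : EuclideanSpace ℝ (Fin n) → EuclideanSpace ℝ (Fin n))
    (Ψinv : EuclideanSpace ℝ (Fin n) → EuclideanSpace ℝ (Fin n))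
    (hΨ : ContDiffOn ℝ (⊤ : ℕ∞) Ψ V) (hΨinv : ContDiffOn ℝ (⊤ : ℕ∞) Ψinv W)
    (hΨim : Ψ '' V = W) (hΨ0 : Ψ 0 = 0)
    (hleft : ∀ y ∈ V, Ψinv (Ψ y) = y) (hright : ∀ x ∈ W, Ψ (Ψinv x) = x)
    (H : EuclideanSpace ℝ (Fin n) → ℝ) (hH : ContDiffOn ℝ (⊤ : ℕ∞) H W)
    (hHΨ : ∀ y ∈ V, H (Ψ y) = ‖y‖ ^ 2)
    (hH0 : H 0 = 0) (hgrad : fderiv ℝ H 0 = 0)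
    (hHess : ∀ v : EuclideanSpace ℝ (Fin n), v ≠ 0 → 0 < iteratedFDeriv ℝ 2 H 0 ![v, v]) :
    (∃ t₀ > (0 : ℝ), ∀ t : ℝ, 0 < t → t < t₀ →
        (volume {x ∈ W | H x ^ (γ / 2) ≤ t}).toReal =
          t ^ ((n : ℝ) / γ) *
            ∫ u in Metric.closedBall (0 : EuclideanSpace ℝ (Fin n)) 1,
              |(fderiv ℝ Ψ ((t ^ (1 / γ) : ℝ) • u)).det|) ∧
    (∃ r₀ > (0 : ℝ), ContDiffOn ℝ (⊤ : ℕ∞)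
        (fun r : ℝ => ∫ u in Metric.closedBall (0 : EuclideanSpace ℝ (Fin n)) 1,
          |(fderiv ℝ Ψ (r • u)).det|) (Metric.ball 0 r₀)) ∧
    (∫ u in Metric.closedBall (0 : EuclideanSpace ℝ (Fin n)) 1,
        |(fderiv ℝ Ψ ((0 : ℝ) • u)).det|) =
      (volume {x : EuclideanSpace ℝ (Fin n) |
        (1 / 2) * iteratedFDeriv ℝ 2 H 0 ![x, x] ≤ 1}).toReal := by
  classical
  -- ## Common facts
  have h0W : (0 : EuclideanSpace ℝ (Fin n)) ∈ W := by
    rw [← hΨim]; exact ⟨0, h0V, hΨ0⟩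
  have hΨinv0 : Ψinv 0 = 0 := by
    have := hleft 0 h0V; rwa [hΨ0] at this
  have hΨdiff : ∀ y ∈ V, DifferentiableAt ℝ Ψ y := fun y hy =>
    (hΨ.contDiffAt (hV.mem_nhds hy)).differentiableAt (by simp)
  have hΨinvdiff : ∀ x ∈ W, DifferentiableAt ℝ Ψinv x := fun x hx =>
    (hΨinv.contDiffAt (hW.mem_nhds hx)).differentiableAt (by simp)
  have hHdiff : ∀ x ∈ W, DifferentiableAt ℝ H x := fun x hx =>
    (hH.contDiffAt (hW.mem_nhds hx)).differentiableAt (by simp)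
  have injV : Set.InjOn Ψ V := fun x hx y hy hxy => by
    rw [← hleft x hx, ← hleft y hy, hxy]
  -- A ∘ B = id and B ∘ A = id
  have hABid : (fderiv ℝ Ψ 0).comp (fderiv ℝ Ψinv 0) = ContinuousLinearMap.id ℝ _ := by
    have h1 : (fun x => Ψ (Ψinv x)) =ᶠ[nhds (0 : EuclideanSpace ℝ (Fin n))]
        (fun x => x) := Filter.eventually_of_mem (hW.mem_nhds h0W) hright
    have h2 : fderiv ℝ (fun x => Ψ (Ψinv x)) 0 = ContinuousLinearMap.id ℝ _ := by
      rw [h1.fderiv_eq, fderiv_id']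
    have h3 : fderiv ℝ (Ψ ∘ Ψinv) 0 = (fderiv ℝ Ψ (Ψinv 0)).comp (fderiv ℝ Ψinv 0) :=
      fderiv_comp 0 (hΨdiff _ (by rw [hΨinv0]; exact h0V)) (hΨinvdiff 0 h0W)
    rw [hΨinv0] at h3
    rw [← h3]
    exact h2
  have hBAid : (fderiv ℝ Ψinv 0).comp (fderiv ℝ Ψ 0) = ContinuousLinearMap.id ℝ _ := by
    have h1 : (fun x => Ψinv (Ψ x)) =ᶠ[nhds (0 : EuclideanSpace ℝ (Fin n))]
        (fun x => x) := Filter.eventually_of_mem (hV.mem_nhds h0V) hleft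
    have h2 : fderiv ℝ (fun x => Ψinv (Ψ x)) 0 = ContinuousLinearMap.id ℝ _ := by
      rw [h1.fderiv_eq, fderiv_id']
    have h3 : fderiv ℝ (Ψinv ∘ Ψ) 0 = (fderiv ℝ Ψinv (Ψ 0)).comp (fderiv ℝ Ψ 0) :=
      fderiv_comp 0 (hΨinvdiff _ (by rw [hΨ0]; exact h0W)) (hΨdiff 0 h0V)
    rw [hΨ0] at h3
    rw [← h3]
    exact h2
  have hdetA : (fderiv ℝ Ψ 0).det ≠ 0 := by
    have h1 : (fderiv ℝ Ψ 0).det * (fderiv ℝ Ψinv 0).det = 1 := by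
      have h0 := congrArg ContinuousLinearMap.det hABid
      have ha : ((fderiv ℝ Ψ 0).comp (fderiv ℝ Ψinv 0)).det
          = (fderiv ℝ Ψ 0).det * (fderiv ℝ Ψinv 0).det := by
        show LinearMap.det (((fderiv ℝ Ψ 0).comp (fderiv ℝ Ψinv 0) :
          EuclideanSpace ℝ (Fin n) →L[ℝ] EuclideanSpace ℝ (Fin n)) :
          EuclideanSpace ℝ (Fin n) →ₗ[ℝ] EuclideanSpace ℝ (Fin n)) = _
        rw [ContinuousLinearMap.toLinearMap_comp, LinearMap.det_comp]
      have hb : (ContinuousLinearMap.id ℝ (EuclideanSpace ℝ (Fin n))).det = 1 := by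
        show LinearMap.det ((ContinuousLinearMap.id ℝ (EuclideanSpace ℝ (Fin n))) :
          EuclideanSpace ℝ (Fin n) →ₗ[ℝ] EuclideanSpace ℝ (Fin n)) = 1
        rw [ContinuousLinearMap.coe_id, LinearMap.det_id]
      rw [ha, hb] at h0
      exact h0
    exact left_ne_zero_of_mul_eq_one h1
  -- ## Hessian identity
  have hnsq : ∀ y : EuclideanSpace ℝ (Fin n),
      HasFDerivAt (fun z : EuclideanSpace ℝ (Fin n) => ‖z‖ ^ 2)
        (2 • (innerSL ℝ y : EuclideanSpace ℝ (Fin n) →L[ℝ] ℝ)) y := by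
    intro y
    simpa using (hasFDerivAt_id y).norm_sq
  have hfd_nsq : (fderiv ℝ (fun z : EuclideanSpace ℝ (Fin n) => ‖z‖ ^ 2))
      = fun y => (2 • (innerSL ℝ y : EuclideanSpace ℝ (Fin n) →L[ℝ] ℝ)) :=
    funext fun y => (hnsq y).fderiv
  have h2a : fderiv ℝ (fderiv ℝ (fun z : EuclideanSpace ℝ (Fin n) => ‖z‖ ^ 2)) 0
      = (2 • (innerSL ℝ) :
          EuclideanSpace ℝ (Fin n) →L[ℝ] EuclideanSpace ℝ (Fin n) →L[ℝ] ℝ) := by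
    rw [hfd_nsq]
    have heq : (fun y : EuclideanSpace ℝ (Fin n) =>
        (2 • (innerSL ℝ y : EuclideanSpace ℝ (Fin n) →L[ℝ] ℝ)))
        = ⇑(2 • (innerSL ℝ) :
          EuclideanSpace ℝ (Fin n) →L[ℝ] EuclideanSpace ℝ (Fin n) →L[ℝ] ℝ) := by
      funext y; simp
    rw [heq, ContinuousLinearMap.fderiv]
  have hTV : ∀ y ∈ V, (fderiv ℝ H (Ψ y)).comp (fderiv ℝ Ψ y)
      = (2 • (innerSL ℝ y : EuclideanSpace ℝ (Fin n) →L[ℝ] ℝ)) := by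
    intro y hy
    have hΨyW : Ψ y ∈ W := by rw [← hΨim]; exact mem_image_of_mem Ψ hy
    have hc : fderiv ℝ (H ∘ Ψ) y = (fderiv ℝ H (Ψ y)).comp (fderiv ℝ Ψ y) :=
      fderiv_comp y (hHdiff _ hΨyW) (hΨdiff y hy)
    have he : (H ∘ Ψ) =ᶠ[nhds y] (fun z : EuclideanSpace ℝ (Fin n) => ‖z‖ ^ 2) :=
      Filter.eventually_of_mem (hV.mem_nhds hy) hHΨ
    have := he.fderiv_eq (𝕜 := ℝ)
    rw [hc] at this
    rw [this, hfd_nsq]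
  have hD1diff : DifferentiableAt ℝ (fderiv ℝ H) 0 := by
    have h := (hH.fderiv_of_isOpen (m := (⊤ : ℕ∞)) hW (by simp)).contDiffAt (hW.mem_nhds h0W)
    exact h.differentiableAt (by simp)
  have hD2diff : DifferentiableAt ℝ (fderiv ℝ Ψ) 0 := by
    have h := (hΨ.fderiv_of_isOpen (m := (⊤ : ℕ∞)) hV (by simp)).contDiffAt (hV.mem_nhds h0V)
    exact h.differentiableAt (by simp)
  have hc : HasFDerivAt (fun y => fderiv ℝ H (Ψ y))
      ((fderiv ℝ (fderiv ℝ H) 0).comp (fderiv ℝ Ψ 0)) 0 := by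
    have hg : HasFDerivAt (fderiv ℝ H) (fderiv ℝ (fderiv ℝ H) 0) (Ψ 0) := by
      rw [hΨ0]; exact hD1diff.hasFDerivAt
    exact hg.comp 0 (hΨdiff 0 h0V).hasFDerivAt
  have hd : HasFDerivAt (fderiv ℝ Ψ) (fderiv ℝ (fderiv ℝ Ψ) 0) 0 := hD2diff.hasFDerivAt
  have hcomp := hc.clm_comp hd
  have hfdT : fderiv ℝ (fun y => (fderiv ℝ H (Ψ y)).comp (fderiv ℝ Ψ y)) 0
      = fderiv ℝ (fun y : EuclideanSpace ℝ (Fin n) =>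
          (2 • (innerSL ℝ y : EuclideanSpace ℝ (Fin n) →L[ℝ] ℝ))) 0 :=
    Filter.EventuallyEq.fderiv_eq (Filter.eventually_of_mem (hV.mem_nhds h0V) hTV)
  have hkey : ∀ v w : EuclideanSpace ℝ (Fin n),
      fderiv ℝ (fderiv ℝ H) 0 (fderiv ℝ Ψ 0 v) (fderiv ℝ Ψ 0 w)
        = 2 * (inner ℝ v w : ℝ) := by
    intro v w
    have h1 := hcomp.fderiv
    rw [hfdT] at h1
    rw [← hfd_nsq] at h1
    rw [h2a] at h1
    have h2 := congrArg (fun T => T v w) h1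
    simp only [ContinuousLinearMap.add_apply, ContinuousLinearMap.coe_comp',
      Function.comp_apply, ContinuousLinearMap.flip_apply,
      ContinuousLinearMap.compL_apply, ContinuousLinearMap.smul_apply,
      innerSL_apply_apply] at h2
    rw [hΨ0, hgrad] at h2
    have h3 := h2.symm
    simp at h3
    exact h3
  have hQA : ∀ v : EuclideanSpace ℝ (Fin n),
      iteratedFDeriv ℝ 2 H 0 ![fderiv ℝ Ψ 0 v, fderiv ℝ Ψ 0 v] = 2 * ‖v‖ ^ 2 := by
    intro v
    rw [iteratedFDeriv_two_apply]
    simp only [Matrix.cons_val_zero, Matrix.cons_val_one, Matrix.head_cons]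
    rw [hkey v v, real_inner_self_eq_norm_sq]
  -- ## Conjunct 3
  have hconj3 : (∫ u in Metric.closedBall (0 : EuclideanSpace ℝ (Fin n)) 1,
        |(fderiv ℝ Ψ ((0 : ℝ) • u)).det|) =
      (volume {x : EuclideanSpace ℝ (Fin n) |
        (1 / 2) * iteratedFDeriv ℝ 2 H 0 ![x, x] ≤ 1}).toReal := by
    have hset : {x : EuclideanSpace ℝ (Fin n) |
        (1 / 2) * iteratedFDeriv ℝ 2 H 0 ![x, x] ≤ 1}
        = (fderiv ℝ Ψ 0) '' Metric.closedBall 0 1 := by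
      ext x
      simp only [Set.mem_setOf_eq, Set.mem_image]
      constructor
      · intro hx
        have hAx : fderiv ℝ Ψ 0 (fderiv ℝ Ψinv 0 x) = x := by
          have := ContinuousLinearMap.ext_iff.1 hABid x
          simpa using this
        refine ⟨fderiv ℝ Ψinv 0 x, ?_, hAx⟩
        rw [mem_closedBall_zero_iff]
        have h2 : (1 / 2 : ℝ) * iteratedFDeriv ℝ 2 H 0
            ![fderiv ℝ Ψ 0 (fderiv ℝ Ψinv 0 x), fderiv ℝ Ψ 0 (fderiv ℝ Ψinv 0 x)] ≤ 1 := by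
          rw [hAx]; exact hx
        rw [hQA (fderiv ℝ Ψinv 0 x)] at h2
        nlinarith [norm_nonneg (fderiv ℝ Ψinv 0 x)]
      · rintro ⟨v, hv, rfl⟩
        rw [hQA v]
        rw [mem_closedBall_zero_iff] at hv
        nlinarith [norm_nonneg v]
    rw [hset]
    have hvol := Measure.addHaar_image_continuousLinearMap (μ := volume) (fderiv ℝ Ψ 0)
      (Metric.closedBall 0 1)
    rw [hvol]
    have hint : (∫ u in Metric.closedBall (0 : EuclideanSpace ℝ (Fin n)) 1,
        |(fderiv ℝ Ψ ((0 : ℝ) • u)).det|)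
        = (volume (Metric.closedBall (0 : EuclideanSpace ℝ (Fin n)) 1)).toReal
            • |(fderiv ℝ Ψ 0).det| := by
      simp only [zero_smul]
      exact setIntegral_const _
    rw [hint, ENNReal.toReal_mul, ENNReal.toReal_ofReal (abs_nonneg _), smul_eq_mul]
    ring
  -- ## Conjunct 1
  have hconj1 : ∃ t₀ > (0 : ℝ), ∀ t : ℝ, 0 < t → t < t₀ →
      (volume {x ∈ W | H x ^ (γ / 2) ≤ t}).toReal =
        t ^ ((n : ℝ) / γ) *
          ∫ u in Metric.closedBall (0 : EuclideanSpace ℝ (Fin n)) 1,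
            |(fderiv ℝ Ψ ((t ^ (1 / γ) : ℝ) • u)).det| := by
    obtain ⟨ε₁, hε₁pos, hball⟩ : ∃ ε₁ > (0:ℝ),
        Metric.closedBall (0 : EuclideanSpace ℝ (Fin n)) ε₁ ⊆ V := by
      rcases Metric.mem_nhds_iff.1 (hV.mem_nhds h0V) with ⟨ε, hε, hsub⟩
      exact ⟨ε/2, by positivity,
        subset_trans (Metric.closedBall_subset_ball (by linarith)) hsub⟩
    have hγ0 : (0:ℝ) < γ := lt_trans one_pos hγ
    refine ⟨ε₁ ^ γ, Real.rpow_pos_of_pos hε₁pos γ, ?_⟩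
    intro t ht htt₀
    set r : ℝ := t ^ (1/γ) with hrdef
    have hr0 : 0 < r := Real.rpow_pos_of_pos ht _
    have hrε : r < ε₁ := by
      have h1 : t ^ (1/γ) < (ε₁ ^ γ) ^ (1/γ) :=
        Real.rpow_lt_rpow ht.le htt₀ (by positivity)
      rwa [← Real.rpow_mul hε₁pos.le, mul_one_div_cancel hγ0.ne', Real.rpow_one] at h1
    have hsub : Metric.closedBall (0 : EuclideanSpace ℝ (Fin n)) r ⊆ V :=
      subset_trans (Metric.closedBall_subset_closedBall hrε.le) hball
    have hsetW : {x ∈ W | H x ^ (γ/2) ≤ t} = Ψ '' Metric.closedBall 0 r := by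
      ext x
      constructor
      · rintro ⟨hxW, hxt⟩
        rw [← hΨim] at hxW
        obtain ⟨y, hyV, rfl⟩ := hxW
        rw [hHΨ y hyV] at hxt
        have h2 : ((‖y‖ ^ 2 : ℝ)) ^ (γ/2) = ‖y‖ ^ γ := by
          rw [← Real.rpow_natCast ‖y‖ 2, ← Real.rpow_mul (norm_nonneg y)]
          congr 1
          push_cast
          ring
        rw [h2] at hxt
        have h3 : ‖y‖ ≤ r := by
          have h4 : (‖y‖ ^ γ) ^ (1/γ) ≤ t ^ (1/γ) :=
            Real.rpow_le_rpow (Real.rpow_nonneg (norm_nonneg y) γ) hxt (by positivity)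
          rwa [← Real.rpow_mul (norm_nonneg y), mul_one_div_cancel hγ0.ne',
            Real.rpow_one] at h4
        exact ⟨y, mem_closedBall_zero_iff.2 h3, rfl⟩
      · rintro ⟨y, hy, rfl⟩
        have hyV : y ∈ V := hsub hy
        refine ⟨by rw [← hΨim]; exact mem_image_of_mem Ψ hyV, ?_⟩
        rw [hHΨ y hyV]
        have h2 : ((‖y‖ ^ 2 : ℝ)) ^ (γ/2) = ‖y‖ ^ γ := by
          rw [← Real.rpow_natCast ‖y‖ 2, ← Real.rpow_mul (norm_nonneg y)]
          congr 1
          push_cast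
          ring
        rw [h2]
        have h3 : ‖y‖ ≤ r := mem_closedBall_zero_iff.1 hy
        calc ‖y‖ ^ γ ≤ r ^ γ := Real.rpow_le_rpow (norm_nonneg y) h3 hγ0.le
          _ = t := by
            rw [hrdef, ← Real.rpow_mul ht.le, one_div_mul_cancel hγ0.ne', Real.rpow_one]
    have hCoV : volume (Ψ '' Metric.closedBall (0 : EuclideanSpace ℝ (Fin n)) r)
        = ∫⁻ x in Metric.closedBall (0 : EuclideanSpace ℝ (Fin n)) r,
            ENNReal.ofReal |(fderiv ℝ Ψ x).det| :=
      (lintegral_abs_det_fderiv_eq_addHaar_image volume measurableSet_closedBall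
        (fun x hx => (hΨdiff x (hsub hx)).hasFDerivAt.hasFDerivWithinAt)
        (injV.mono hsub)).symm
    have hcontρ : ContinuousOn
        (fun x : EuclideanSpace ℝ (Fin n) => |(fderiv ℝ Ψ x).det|) V :=
      (continuous_abs.comp ContinuousLinearMap.continuous_det).comp_continuousOn
        (hΨ.continuousOn_fderiv_of_isOpen hV (by simp))
    have hreal : (∫ x in Metric.closedBall (0 : EuclideanSpace ℝ (Fin n)) r,
        |(fderiv ℝ Ψ x).det|)
        = (∫⁻ x in Metric.closedBall (0 : EuclideanSpace ℝ (Fin n)) r,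
            ENNReal.ofReal |(fderiv ℝ Ψ x).det|).toReal :=
      integral_eq_lintegral_of_nonneg_ae (ae_of_all _ fun x => abs_nonneg _)
        ((hcontρ.mono hsub).aestronglyMeasurable measurableSet_closedBall)
    have hsmulball : r • Metric.closedBall (0 : EuclideanSpace ℝ (Fin n)) 1
        = Metric.closedBall (0 : EuclideanSpace ℝ (Fin n)) r := by
      rw [_root_.smul_closedBall _ _ zero_le_one]
      simp [Real.norm_eq_abs, abs_of_pos hr0]
    have hscale : (∫ u in Metric.closedBall (0 : EuclideanSpace ℝ (Fin n)) 1,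
        |(fderiv ℝ Ψ (r • u)).det|)
        = (r ^ n)⁻¹ * ∫ x in Metric.closedBall (0 : EuclideanSpace ℝ (Fin n)) r,
            |(fderiv ℝ Ψ x).det| := by
      have h := Measure.setIntegral_comp_smul_of_pos volume
        (fun x : EuclideanSpace ℝ (Fin n) => |(fderiv ℝ Ψ x).det|)
        (Metric.closedBall (0 : EuclideanSpace ℝ (Fin n)) 1) hr0
      rw [hsmulball] at h
      simpa [finrank_euclideanSpace_fin, smul_eq_mul] using h
    have hpow : t ^ ((n:ℝ)/γ) = r ^ n := by
      rw [hrdef, ← Real.rpow_natCast (t ^ (1/γ)) n, ← Real.rpow_mul ht.le]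
      congr 1
      ring
    rw [hsetW, hCoV, ← hreal, hscale, hpow]
    have hrn : (r:ℝ) ^ n ≠ 0 := by positivity
    field_simp
  -- ## Conjunct 2
  have hconj2 : ∃ r₀ > (0 : ℝ), ContDiffOn ℝ (⊤ : ℕ∞)
      (fun r : ℝ => ∫ u in Metric.closedBall (0 : EuclideanSpace ℝ (Fin n)) 1,
        |(fderiv ℝ Ψ (r • u)).det|) (Metric.ball 0 r₀) := by
    have hfdc := hΨ.fderiv_of_isOpen (m := (⊤ : ℕ∞)) hV (by simp)
    have hρc : ∀ x ∈ V, ContDiffAt ℝ (⊤ : ℕ∞)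
        (fun x : EuclideanSpace ℝ (Fin n) => (fderiv ℝ Ψ x).det) x := fun x hx =>
      (aux18_analyticAt_det (fderiv ℝ Ψ x)).contDiffAt.comp x (hfdc.contDiffAt (hV.mem_nhds hx))
    have hρcont : ContinuousAt
        (fun x : EuclideanSpace ℝ (Fin n) => (fderiv ℝ Ψ x).det) 0 := (hρc 0 h0V).continuousAt
    obtain ⟨δs, hδs0, hδs⟩ := Metric.continuousAt_iff.1 hρcont |(fderiv ℝ Ψ 0).det|
      (abs_pos.2 hdetA)
    obtain ⟨s, hs⟩ : ∃ s : ℝ, ∀ x : EuclideanSpace ℝ (Fin n), dist x 0 < δs →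
        |(fderiv ℝ Ψ x).det| = s * (fderiv ℝ Ψ x).det := by
      rcases lt_or_gt_of_ne hdetA with hneg | hpos
      · refine ⟨-1, fun x hx => ?_⟩
        have h1 := hδs hx
        rw [Real.dist_eq, abs_of_neg hneg, abs_lt] at h1
        have hx0 : (fderiv ℝ Ψ x).det < 0 := by linarith [h1.2]
        rw [abs_of_neg hx0]; ring
      · refine ⟨1, fun x hx => ?_⟩
        have h1 := hδs hx
        rw [Real.dist_eq, abs_of_pos hpos, abs_lt] at h1
        have hx0 : 0 < (fderiv ℝ Ψ x).det := by linarith [h1.1]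
        rw [abs_of_pos hx0]; ring
    obtain ⟨ε₁, hε₁pos, hball⟩ : ∃ ε₁ > (0:ℝ),
        Metric.closedBall (0 : EuclideanSpace ℝ (Fin n)) ε₁ ⊆ V := by
      rcases Metric.mem_nhds_iff.1 (hV.mem_nhds h0V) with ⟨ε, hε, hsub⟩
      exact ⟨ε/2, by positivity,
        subset_trans (Metric.closedBall_subset_ball (by linarith)) hsub⟩
    set r₀ : ℝ := min ε₁ δs / 2 with hr₀
    have hr₀pos : 0 < r₀ := by positivity
    have hr₀ε : 2 * r₀ ≤ ε₁ := by rw [hr₀]; linarith [min_le_left ε₁ δs]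
    have hr₀δ : 2 * r₀ ≤ δs := by rw [hr₀]; linarith [min_le_right ε₁ δs]
    let χ : ContDiffBump (0 : EuclideanSpace ℝ (Fin n)) := ⟨1, 3/2, by norm_num, by norm_num⟩
    set g : ℝ → EuclideanSpace ℝ (Fin n) → ℝ :=
      fun p t => χ t * (s * (fderiv ℝ Ψ (p • t)).det) with hgdef
    set f : EuclideanSpace ℝ (Fin n) → ℝ :=
      (Metric.closedBall (0 : EuclideanSpace ℝ (Fin n)) 1).indicator (fun _ => (1:ℝ)) with hfdef
    have hf : LocallyIntegrable f volume := by
      have : IntegrableOn (fun _ : EuclideanSpace ℝ (Fin n) => (1:ℝ))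
          (Metric.closedBall (0 : EuclideanSpace ℝ (Fin n)) 1) volume :=
        integrableOn_const (isCompact_closedBall (0 : EuclideanSpace ℝ (Fin n)) 1).measure_lt_top.ne
      exact (this.integrable_indicator measurableSet_closedBall).locallyIntegrable
    have hgs : ∀ p, ∀ x, p ∈ Metric.ball (0:ℝ) r₀ →
        x ∉ Metric.closedBall (0 : EuclideanSpace ℝ (Fin n)) (3/2) → g p x = 0 := by
      intro p x _ hx
      have : χ x = 0 := χ.zero_of_le_dist (by
        rw [Metric.mem_closedBall, not_le] at hx; exact hx.le)
      simp [hgdef, this]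
    have hg : ContDiffOn ℝ (⊤ : ℕ∞) (Function.uncurry g) (Metric.ball (0:ℝ) r₀ ×ˢ Set.univ) := by
      rintro ⟨p, t⟩ ⟨hp, -⟩
      apply ContDiffAt.contDiffWithinAt
      have hp' : ‖p‖ < r₀ := mem_ball_zero_iff.1 hp
      by_cases ht : ‖t‖ < 2
      · have hpt : p • t ∈ V := by
          apply hball
          rw [mem_closedBall_zero_iff, norm_smul]
          have := mul_le_mul hp'.le ht.le (norm_nonneg t) hr₀pos.le
          linarith
        have h1 : ContDiffAt ℝ (⊤ : ℕ∞)
            (fun q : ℝ × EuclideanSpace ℝ (Fin n) => q.1 • q.2) (p, t) :=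
          contDiffAt_fst.smul contDiffAt_snd
        have h2 := (hρc (p • t) hpt).comp (p, t) h1
        have h3 : ContDiffAt ℝ (⊤ : ℕ∞)
            (fun q : ℝ × EuclideanSpace ℝ (Fin n) => χ q.2) (p, t) :=
          χ.contDiff.contDiffAt.comp (p, t) contDiffAt_snd
        exact h3.mul (contDiffAt_const.mul h2)
      · have hev : (Function.uncurry g) =ᶠ[nhds (p, t)] fun _ => (0:ℝ) := by
          have ho : IsOpen {q : ℝ × EuclideanSpace ℝ (Fin n) | 3/2 < ‖q.2‖} :=
            isOpen_lt continuous_const (continuous_norm.comp continuous_snd)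
          filter_upwards [ho.mem_nhds (show (3/2:ℝ) < ‖t‖ by push_neg at ht; linarith)] with q hq
          have : χ q.2 = 0 := χ.zero_of_le_dist (by rw [dist_zero_right]; exact le_of_lt hq)
          simp [Function.uncurry, hgdef, this]
        exact contDiffAt_const.congr_of_eventuallyEq hev
    have hmain := contDiffOn_convolution_left_with_param (ContinuousLinearMap.lsmul ℝ ℝ)
      (μ := volume) (n := (⊤ : ℕ∞)) Metric.isOpen_ball
      (isCompact_closedBall (0 : EuclideanSpace ℝ (Fin n)) (3/2)) hgs hf hg
    have hcomp : ContDiffOn ℝ (⊤ : ℕ∞)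
        (fun p : ℝ => convolution (g p) f (ContinuousLinearMap.lsmul ℝ ℝ) volume 0)
        (Metric.ball 0 r₀) :=
      hmain.comp (contDiffOn_id.prodMk contDiffOn_const) (fun p hp => ⟨hp, Set.mem_univ _⟩)
    refine ⟨r₀, hr₀pos, hcomp.congr ?_⟩
    intro r hr
    have hr' : ‖r‖ < r₀ := mem_ball_zero_iff.1 hr
    show _ = convolution (g r) f (ContinuousLinearMap.lsmul ℝ ℝ) volume 0
    have hpt : ∀ t : EuclideanSpace ℝ (Fin n), g r t • f (0 - t)
        = (Metric.closedBall (0 : EuclideanSpace ℝ (Fin n)) 1).indicator (g r) t := by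
      intro t
      by_cases ht : t ∈ Metric.closedBall (0 : EuclideanSpace ℝ (Fin n)) 1
      · have ht' : 0 - t ∈ Metric.closedBall (0 : EuclideanSpace ℝ (Fin n)) 1 := by
          simpa [mem_closedBall_zero_iff, norm_neg] using ht
        rw [hfdef, Set.indicator_of_mem ht', Set.indicator_of_mem ht, smul_eq_mul, mul_one]
      · have ht' : 0 - t ∉ Metric.closedBall (0 : EuclideanSpace ℝ (Fin n)) 1 := by
          simpa [mem_closedBall_zero_iff, norm_neg] using ht
        rw [hfdef, Set.indicator_of_notMem ht', Set.indicator_of_notMem ht, smul_eq_mul, mul_zero]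
    rw [convolution_lsmul, integral_congr_ae (Filter.Eventually.of_forall hpt),
      integral_indicator measurableSet_closedBall]
    apply setIntegral_congr_fun measurableSet_closedBall
    intro u hu
    have hu1 : ‖u‖ ≤ 1 := mem_closedBall_zero_iff.1 hu
    have hχ : χ u = 1 := χ.one_of_mem_closedBall (by
      rw [Metric.mem_closedBall, dist_zero_right]; exact hu1)
    have hru : dist (r • u) 0 < δs := by
      rw [dist_zero_right, norm_smul]
      have := mul_le_mul_of_nonneg_left hu1 (norm_nonneg r)
      linarith
    show |_| = χ u * (s * _)
    rw [hχ, one_mul]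
    exact hs (r • u) hru
  exact ⟨hconj1, hconj2, hconj3⟩
end
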